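/- arXiv:2110.10507 — 4 statements merged into one kernel-verified Lean document; each statement's English description precedes it below -/
import Mathlib

section
/- Let ρ, u₁, u₂, u₃, T : ℝ³ × ℝ → ℝ be twice continuously differentiable fields with ρ > 0 and T > 0 everywhere, and suppose they solve the Eulerian model ∂q/∂t + Σ_{j=1}^{3} ∂f_j/∂x_j = Σ_{j=1}^{3} ∂/∂x_j (ν ∂q/∂x_j), where ν = αμ/ρ with constants α > 0 and μ > 0. Then the following pointwise entropy identity holds at every point: ∂S/∂t + Σ_{j=1}^{3} ∂F_j/∂x_j = Σ_{j=1}^{3} ∂/∂x_j (ν ∂S/∂x_j) − Σ_{j=1}^{3} ν (∂w/∂x_j)ᵀ M(v) (∂w/∂x_j); in particular, since M(v) is positive semidefinite and ν > 0, ∂S/∂t + Σ_{j=1}^{3} ∂F_j/∂x_j ≤ Σ_{j=1}^{3} ∂/∂x_j (ν ∂S/∂x_j). -/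
/-! Contracting the system with the entropy variables `w = ∂S/∂q` turns `∂ₜq + Σⱼ ∂ⱼfⱼ` into
`∂ₜS + Σⱼ ∂ⱼFⱼ`, because the Euler fluxes are entropy compatible (`w · ∂f_j = ∂F_j`), and turns
each viscous term `w · ∂ⱼ(ν ∂ⱼq)` into `∂ⱼ(ν ∂ⱼS) - ν ∂ⱼw · ∂ⱼq` by the product rule. Finally
`∂ⱼq = M ∂ⱼw` since `M = dq/dw`, and `M` is positive semidefinite: its quadratic form is an
explicit sum of squares. -/

open Matrix

noncomputable section

/-- Entropy variables `w(v)` for the perfect gas with `s = c_v log T - R log ρ`,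
`h = c_p T`, `c_p = c_v + R`:
`w = (h/T - s - |u|²/(2T), u₁/T, u₂/T, u₃/T, -1/T)`. -/
def entropyVars (R cv ρ u₁ u₂ u₃ T : ℝ) : Fin 5 → ℝ :=
  ![((cv + R) * T) / T - (cv * Real.log T - R * Real.log ρ)
      - (u₁ ^ 2 + u₂ ^ 2 + u₃ ^ 2) / (2 * T),
    u₁ / T, u₂ / T, u₃ / T, -(1 / T)]

/-- The symmetric 5×5 change-of-variables Jacobian `dq/dw` expressed in primitive
variables `v = (ρ, u₁, u₂, u₃, T)`, with gas constant `R` and heat capacity at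
constant pressure `cp`. -/
def Mmat (R cp ρ u₁ u₂ u₃ T : ℝ) : Matrix (Fin 5) (Fin 5) ℝ :=
  !![ρ / R, ρ * u₁ / R, ρ * u₂ / R, ρ * u₃ / R,
       ρ * (-2 * R * T + (u₁ ^ 2 + u₂ ^ 2 + u₃ ^ 2) + 2 * T * cp) / (2 * R);
     ρ * u₁ / R, ρ * (T + u₁ ^ 2 / R), ρ * u₁ * u₂ / R, ρ * u₁ * u₃ / R,
       ρ * u₁ * ((u₁ ^ 2 + u₂ ^ 2 + u₃ ^ 2) + 2 * T * cp) / (2 * R);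
     ρ * u₂ / R, ρ * u₁ * u₂ / R, ρ * (T + u₂ ^ 2 / R), ρ * u₂ * u₃ / R,
       ρ * u₂ * ((u₁ ^ 2 + u₂ ^ 2 + u₃ ^ 2) + 2 * T * cp) / (2 * R);
     ρ * u₃ / R, ρ * u₁ * u₃ / R, ρ * u₂ * u₃ / R, ρ * (T + u₃ ^ 2 / R),
       ρ * u₃ * ((u₁ ^ 2 + u₂ ^ 2 + u₃ ^ 2) + 2 * T * cp) / (2 * R);
     ρ * (-2 * R * T + (u₁ ^ 2 + u₂ ^ 2 + u₃ ^ 2) + 2 * T * cp) / (2 * R),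
       ρ * u₁ * ((u₁ ^ 2 + u₂ ^ 2 + u₃ ^ 2) + 2 * T * cp) / (2 * R),
       ρ * u₂ * ((u₁ ^ 2 + u₂ ^ 2 + u₃ ^ 2) + 2 * T * cp) / (2 * R),
       ρ * u₃ * ((u₁ ^ 2 + u₂ ^ 2 + u₃ ^ 2) + 2 * T * cp) / (2 * R),
       ρ * ((u₁ ^ 2 + u₂ ^ 2 + u₃ ^ 2) ^ 2
            + 4 * T * cp * (-(R * T) + (u₁ ^ 2 + u₂ ^ 2 + u₃ ^ 2) + T * cp)) / (4 * R)]

/-- Partial derivative in the spatial direction `x_j` of a scalar field on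
`ℝ³ × ℝ` (space × time). -/
def pd (j : Fin 3) (f : (Fin 3 → ℝ) × ℝ → ℝ) (p : (Fin 3 → ℝ) × ℝ) : ℝ :=
  deriv (fun s => f (Function.update p.1 j s, p.2)) (p.1 j)

/-- Partial derivative in time of a scalar field on `ℝ³ × ℝ` (space × time). -/
def pt (f : (Fin 3 → ℝ) × ℝ → ℝ) (p : (Fin 3 → ℝ) × ℝ) : ℝ :=
  deriv (fun s => f (p.1, s)) p.2

/-- Conservative variables `q(v) = (ρ, ρu₁, ρu₂, ρu₃, ρE)`, `E = c_v T + |u|²/2`. -/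
def consVars (cv ρ u₁ u₂ u₃ T : ℝ) : Fin 5 → ℝ :=
  ![ρ, ρ * u₁, ρ * u₂, ρ * u₃, ρ * (cv * T + (u₁ ^ 2 + u₂ ^ 2 + u₃ ^ 2) / 2)]

/-- Inviscid (Euler) flux in direction `x_j`, with `p = ρRT`, `E = c_v T + |u|²/2`. -/
def invFlux (R cv : ℝ) (j : Fin 3) (ρ u₁ u₂ u₃ T : ℝ) : Fin 5 → ℝ :=
  ![ρ * ![u₁, u₂, u₃] j,
    ρ * ![u₁, u₂, u₃] j * u₁ + (if j = 0 then ρ * R * T else 0),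
    ρ * ![u₁, u₂, u₃] j * u₂ + (if j = 1 then ρ * R * T else 0),
    ρ * ![u₁, u₂, u₃] j * u₃ + (if j = 2 then ρ * R * T else 0),
    ![u₁, u₂, u₃] j * (ρ * (cv * T + (u₁ ^ 2 + u₂ ^ 2 + u₃ ^ 2) / 2) + ρ * R * T)]

def spaceLine (p : (Fin 3 → ℝ) × ℝ) (j : Fin 3) (s : ℝ) : (Fin 3 → ℝ) × ℝ :=
  (Function.update p.1 j s, p.2)

@[simp]
theorem spaceLine_self (p : (Fin 3 → ℝ) × ℝ) (j : Fin 3) : spaceLine p j (p.1 j) = p := by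
  simp [spaceLine]

theorem hasDerivAt_spaceLine (p : (Fin 3 → ℝ) × ℝ) (j : Fin 3) (s : ℝ) :
    HasDerivAt (spaceLine p j) (Pi.single j 1, 0) s := by
  have h := (hasFDerivAt_update (𝕜 := ℝ) (i := j) p.1 s).hasDerivAt.prodMk (hasDerivAt_const s p.2)
  have hderiv : ContinuousLinearMap.pi (Pi.single j (ContinuousLinearMap.id ℝ ℝ)) 1
      = (Pi.single j 1 : Fin 3 → ℝ) := by
    ext i
    by_cases hi : i = j <;> simp [hi]
  exact hderiv ▸ h

section SpaceTime

variable {p : (Fin 3 → ℝ) × ℝ} {j : Fin 3} {f : (Fin 3 → ℝ) × ℝ → ℝ}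

theorem pd_eq_fderiv (hf : DifferentiableAt ℝ f p) :
    pd j f p = fderiv ℝ f p (Pi.single j 1, 0) := by
  rw [← spaceLine_self p j] at hf
  have h := (hf.hasFDerivAt.comp_hasDerivAt _ (hasDerivAt_spaceLine p j (p.1 j))).deriv
  rwa [spaceLine_self] at h

theorem contDiff_pd {m n : WithTop ℕ∞} (hmn : m + 1 ≤ n) (hf : ContDiff ℝ n f) :
    ContDiff ℝ m (pd j f) := by
  have hf1 : Differentiable ℝ f := hf.differentiable fun h => by simp [h] at hmn
  have h : pd j f = fun p => fderiv ℝ f p (Pi.single j 1, 0) :=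
    funext fun p => pd_eq_fderiv (hf1 p)
  rw [h]
  exact (hf.fderiv_right hmn).clm_apply contDiff_const

theorem DifferentiableAt.comp_spaceLine (hf : DifferentiableAt ℝ f p) :
    DifferentiableAt ℝ (fun s => f (spaceLine p j s)) (p.1 j) := by
  rw [← spaceLine_self p j] at hf
  exact hf.comp _ (hasDerivAt_spaceLine p j _).differentiableAt

theorem pd_sum_mul {ι : Type*} [Fintype ι] {a b : ι → (Fin 3 → ℝ) × ℝ → ℝ}
    (ha : ∀ k, DifferentiableAt ℝ (a k) p) (hb : ∀ k, DifferentiableAt ℝ (b k) p) :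
    pd j (fun y => ∑ k, a k y * b k y) p = ∑ k, (pd j (a k) p * b k p + a k p * pd j (b k) p) := by
  have h := HasDerivAt.fun_sum (u := Finset.univ) fun k _ =>
    ((ha k).comp_spaceLine (j := j)).hasDerivAt.mul ((hb k).comp_spaceLine (j := j)).hasDerivAt
  simp only [spaceLine_self] at h
  exact h.deriv

end SpaceTime

section PerfectGas

variable {E : Type*} [NormedAddCommGroup E] [NormedSpace ℝ E]
  {ρ u₁ u₂ u₃ T : E → ℝ} {γ : ℝ → E} {x : ℝ} {p : E} {R cv : ℝ}

theorem contDiff_consVars {n : WithTop ℕ∞} (hρ : ContDiff ℝ n ρ) (hu₁ : ContDiff ℝ n u₁)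
    (hu₂ : ContDiff ℝ n u₂) (hu₃ : ContDiff ℝ n u₃) (hT : ContDiff ℝ n T) (k : Fin 5) :
    ContDiff ℝ n (fun y => consVars cv (ρ y) (u₁ y) (u₂ y) (u₃ y) (T y) k) := by
  fin_cases k <;>
    simp only [consVars, Fin.zero_eta, Fin.mk_one, Fin.reduceFinMk, Matrix.cons_val] <;> fun_prop

theorem differentiableAt_entropyVars (hρ : DifferentiableAt ℝ ρ p)
    (hu₁ : DifferentiableAt ℝ u₁ p) (hu₂ : DifferentiableAt ℝ u₂ p)
    (hu₃ : DifferentiableAt ℝ u₃ p) (hT : DifferentiableAt ℝ T p) (hρ0 : ρ p ≠ 0)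
    (hT0 : T p ≠ 0) (k : Fin 5) :
    DifferentiableAt ℝ (fun y => entropyVars R cv (ρ y) (u₁ y) (u₂ y) (u₃ y) (T y) k) p := by
  fin_cases k <;>
    simp only [entropyVars, Fin.zero_eta, Fin.mk_one, Fin.reduceFinMk, Matrix.cons_val] <;>
    fun_prop (disch := simp [*])

theorem deriv_consVars_comp (hR : R ≠ 0) (hγ : DifferentiableAt ℝ γ x) (hx : γ x = p)
    (hρ : DifferentiableAt ℝ ρ p) (hu₁ : DifferentiableAt ℝ u₁ p)
    (hu₂ : DifferentiableAt ℝ u₂ p) (hu₃ : DifferentiableAt ℝ u₃ p)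
    (hT : DifferentiableAt ℝ T p) (hρ0 : ρ p ≠ 0) (hT0 : T p ≠ 0) :
    (fun k => deriv
        (fun s => consVars cv (ρ (γ s)) (u₁ (γ s)) (u₂ (γ s)) (u₃ (γ s)) (T (γ s)) k) x)
      = Mmat R (cv + R) (ρ p) (u₁ p) (u₂ p) (u₃ p) (T p) *ᵥ fun k => deriv
          (fun s => entropyVars R cv (ρ (γ s)) (u₁ (γ s)) (u₂ (γ s)) (u₃ (γ s)) (T (γ s)) k) x := by
  subst hx
  funext k
  simp only [Matrix.mulVec, dotProduct, Fin.sum_univ_five, Mmat, consVars, entropyVars,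
    Matrix.of_apply, Matrix.cons_val, Fin.isValue]
  fin_cases k <;>
  · simp (disch := first | fun_prop (disch := simp [*]) | simp [*]) only [Fin.zero_eta,
      Fin.mk_one, Fin.reduceFinMk, Matrix.cons_val, deriv_fun_add, deriv_fun_sub,
      deriv_fun_mul, deriv_fun_div, deriv.log, deriv_fun_pow, deriv.fun_neg, deriv_const]
    field_simp
    ring

theorem deriv_entropy_comp (hγ : DifferentiableAt ℝ γ x) (hx : γ x = p)
    (hρ : DifferentiableAt ℝ ρ p) (hu₁ : DifferentiableAt ℝ u₁ p)
    (hu₂ : DifferentiableAt ℝ u₂ p) (hu₃ : DifferentiableAt ℝ u₃ p)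
    (hT : DifferentiableAt ℝ T p) (hρ0 : ρ p ≠ 0) (hT0 : T p ≠ 0) :
    deriv (fun s => -(ρ (γ s) * (cv * Real.log (T (γ s)) - R * Real.log (ρ (γ s))))) x
      = entropyVars R cv (ρ p) (u₁ p) (u₂ p) (u₃ p) (T p) ⬝ᵥ fun k => deriv
          (fun s => consVars cv (ρ (γ s)) (u₁ (γ s)) (u₂ (γ s)) (u₃ (γ s)) (T (γ s)) k) x := by
  subst hx
  simp only [dotProduct, Fin.sum_univ_five, consVars, entropyVars, Matrix.cons_val, Fin.isValue]
  simp (disch := first | fun_prop (disch := simp [*]) | simp [*]) only [deriv_fun_add,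
    deriv_fun_sub, deriv_fun_mul, deriv_fun_div, deriv.log, deriv_fun_pow, deriv.fun_neg,
    deriv_const]
  field_simp
  ring

theorem deriv_entropyFlux_comp (hγ : DifferentiableAt ℝ γ x) (hx : γ x = p)
    (hρ : DifferentiableAt ℝ ρ p) (hu₁ : DifferentiableAt ℝ u₁ p)
    (hu₂ : DifferentiableAt ℝ u₂ p) (hu₃ : DifferentiableAt ℝ u₃ p)
    (hT : DifferentiableAt ℝ T p) (hρ0 : ρ p ≠ 0) (hT0 : T p ≠ 0) (j : Fin 3) :
    deriv (fun s => -(ρ (γ s) * ![u₁ (γ s), u₂ (γ s), u₃ (γ s)] j *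
        (cv * Real.log (T (γ s)) - R * Real.log (ρ (γ s))))) x
      = entropyVars R cv (ρ p) (u₁ p) (u₂ p) (u₃ p) (T p) ⬝ᵥ fun k => deriv
          (fun s => invFlux R cv j (ρ (γ s)) (u₁ (γ s)) (u₂ (γ s)) (u₃ (γ s)) (T (γ s)) k) x := by
  subst hx
  fin_cases j <;>
  · simp only [dotProduct, Fin.sum_univ_five, invFlux, entropyVars, Matrix.cons_val, Fin.isValue,
      Fin.zero_eta, Fin.mk_one, Fin.reduceFinMk, Fin.reduceEq, ↓reduceIte, add_zero]
    simp (disch := first | fun_prop (disch := simp [*]) | simp [*]) only [deriv_fun_add,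
      deriv_fun_sub, deriv_fun_mul, deriv_fun_div, deriv.log, deriv_fun_pow, deriv.fun_neg,
      deriv_const]
    field_simp
    ring

end PerfectGas

theorem Mmat_posSemidef {R cv ρ u₁ u₂ u₃ T : ℝ} (hR : 0 < R) (hcv : 0 ≤ cv) (hρ : 0 ≤ ρ)
    (hT : 0 ≤ T) : (Mmat R (cv + R) ρ u₁ u₂ u₃ T).PosSemidef := by
  refine Matrix.PosSemidef.of_dotProduct_mulVec_nonneg ?_ fun z => ?_
  · refine Matrix.IsHermitian.ext fun i j => ?_
    fin_cases i <;> fin_cases j <;> simp [Mmat]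
  · have hsos : star z ⬝ᵥ (Mmat R (cv + R) ρ u₁ u₂ u₃ T *ᵥ z)
        = ρ / R * (z 0 + u₁ * z 1 + u₂ * z 2 + u₃ * z 3
            + ((u₁ ^ 2 + u₂ ^ 2 + u₃ ^ 2) + 2 * T * cv) / 2 * z 4) ^ 2
          + ρ * T * ((z 1 + u₁ * z 4) ^ 2 + (z 2 + u₂ * z 4) ^ 2 + (z 3 + u₃ * z 4) ^ 2)
          + ρ * cv * T ^ 2 * z 4 ^ 2 := by
      simp [Mmat, Matrix.mulVec, dotProduct, Fin.sum_univ_five]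
      field_simp
      ring
    rw [hsos]
    positivity

theorem entropy_balance {ι : Type*} [Fintype ι] {q w : ι → (Fin 3 → ℝ) × ℝ → ℝ}
    {f : Fin 3 → ι → (Fin 3 → ℝ) × ℝ → ℝ} {S ν : (Fin 3 → ℝ) × ℝ → ℝ}
    {F : Fin 3 → (Fin 3 → ℝ) × ℝ → ℝ} {M : Matrix ι ι ℝ} {p : (Fin 3 → ℝ) × ℝ}
    (hSt : pt S p = (fun k => w k p) ⬝ᵥ fun k => pt (q k) p)
    (hSx : ∀ j y, pd j S y = (fun k => w k y) ⬝ᵥ fun k => pd j (q k) y)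
    (hF : ∀ j, pd j (F j) p = (fun k => w k p) ⬝ᵥ fun k => pd j (f j k) p)
    (hqw : ∀ j, (fun k => pd j (q k) p) = M *ᵥ fun k => pd j (w k) p)
    (hw : ∀ k, DifferentiableAt ℝ (w k) p)
    (hν : DifferentiableAt ℝ ν p) (hdq : ∀ j k, DifferentiableAt ℝ (pd j (q k)) p)
    (hpde : ∀ k, pt (q k) p + ∑ j, pd j (f j k) p
      = ∑ j, pd j (fun y => ν y * pd j (q k) y) p) :
    pt S p + ∑ j, pd j (F j) p
      = ∑ j, pd j (fun y => ν y * pd j S y) p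
        - ∑ j, ν p * ((fun k => pd j (w k) p) ⬝ᵥ (M *ᵥ fun k => pd j (w k) p)) := by
  have hleibniz : ∀ j, pd j (fun y => ν y * pd j S y) p
      = ∑ k, (pd j (w k) p * (ν p * pd j (q k) p)
        + w k p * pd j (fun y => ν y * pd j (q k) y) p) := by
    intro j
    have h : (fun y => ν y * pd j S y) = fun y => ∑ k, w k y * (ν y * pd j (q k) y) := by
      funext y
      rw [hSx, dotProduct, Finset.mul_sum]
      exact Finset.sum_congr rfl fun k _ => by ring
    rw [h]
    exact pd_sum_mul hw fun k => hν.mul (hdq j k)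
  calc pt S p + ∑ j, pd j (F j) p
      = ∑ k, w k p * (pt (q k) p + ∑ j, pd j (f j k) p) := by
        simp only [hSt, hF, dotProduct, mul_add, Finset.mul_sum, Finset.sum_add_distrib]
        rw [Finset.sum_comm]
    _ = ∑ k, w k p * ∑ j, pd j (fun y => ν y * pd j (q k) y) p := by simp only [hpde]
    _ = ∑ j, ∑ k, w k p * pd j (fun y => ν y * pd j (q k) y) p := by
        simp only [Finset.mul_sum]
        exact Finset.sum_comm
    _ = ∑ j, (pd j (fun y => ν y * pd j S y) p
          - ν p * ((fun k => pd j (w k) p) ⬝ᵥ (M *ᵥ fun k => pd j (w k) p))) := by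
        refine Finset.sum_congr rfl fun j _ => ?_
        have hcomm : ∀ k, pd j (w k) p * (ν p * pd j (q k) p)
            = ν p * (pd j (w k) p * pd j (q k) p) := fun k => by ring
        rw [hleibniz, ← hqw, dotProduct, Finset.mul_sum, Finset.sum_add_distrib]
        simp only [hcomm]
        ring
    _ = _ := Finset.sum_sub_distrib ..

/-- pointwise entropy identity for the Eulerian model.  If the C²
fields `ρ, u₁, u₂, u₃, T` (with `ρ > 0`, `T > 0`) solve
`∂q/∂t + Σ_j ∂f_j/∂x_j = Σ_j ∂/∂x_j (ν ∂q/∂x_j)` with `ν = αμ/ρ`, then at every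
point `∂S/∂t + Σ_j ∂F_j/∂x_j = Σ_j ∂/∂x_j (ν ∂S/∂x_j) - Σ_j ν (∂w/∂x_j)ᵀ M(v) (∂w/∂x_j)`;
in particular `∂S/∂t + Σ_j ∂F_j/∂x_j ≤ Σ_j ∂/∂x_j (ν ∂S/∂x_j)`. -/
theorem eulerian_pointwise_entropy_identity
    (R cv α μ : ℝ) (hR : 0 < R) (hcv : 0 < cv) (hα : 0 < α) (hμ : 0 < μ)
    (ρ u₁ u₂ u₃ T : (Fin 3 → ℝ) × ℝ → ℝ)
    (hρreg : ContDiff ℝ 2 ρ) (hu₁reg : ContDiff ℝ 2 u₁) (hu₂reg : ContDiff ℝ 2 u₂)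
    (hu₃reg : ContDiff ℝ 2 u₃) (hTreg : ContDiff ℝ 2 T)
    (hρpos : ∀ p, 0 < ρ p) (hTpos : ∀ p, 0 < T p)
    (hpde : ∀ (k : Fin 5) (p : (Fin 3 → ℝ) × ℝ),
      pt (fun p' => consVars cv (ρ p') (u₁ p') (u₂ p') (u₃ p') (T p') k) p
        + ∑ j : Fin 3,
            pd j (fun p' => invFlux R cv j (ρ p') (u₁ p') (u₂ p') (u₃ p') (T p') k) p
      = ∑ j : Fin 3,
          pd j (fun p' => (α * μ / ρ p') *
            pd j (fun p'' => consVars cv (ρ p'') (u₁ p'') (u₂ p'') (u₃ p'') (T p'') k) p') p) :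
    ∀ p : (Fin 3 → ℝ) × ℝ,
      (pt (fun p' => -(ρ p' * (cv * Real.log (T p') - R * Real.log (ρ p')))) p
        + ∑ j : Fin 3,
            pd j (fun p' => -(ρ p' * ![u₁ p', u₂ p', u₃ p'] j *
              (cv * Real.log (T p') - R * Real.log (ρ p')))) p
      = ∑ j : Fin 3,
          pd j (fun p' => (α * μ / ρ p') *
            pd j (fun p'' => -(ρ p'' * (cv * Real.log (T p'') - R * Real.log (ρ p'')))) p') p
        - ∑ j : Fin 3, (α * μ / ρ p) *
            ((fun k => pd j
                (fun p' => entropyVars R cv (ρ p') (u₁ p') (u₂ p') (u₃ p') (T p') k) p) ⬝ᵥ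
              (Mmat R (cv + R) (ρ p) (u₁ p) (u₂ p) (u₃ p) (T p) *ᵥ
                fun k => pd j
                  (fun p' => entropyVars R cv (ρ p') (u₁ p') (u₂ p') (u₃ p') (T p') k) p)))
      ∧
      (pt (fun p' => -(ρ p' * (cv * Real.log (T p') - R * Real.log (ρ p')))) p
        + ∑ j : Fin 3,
            pd j (fun p' => -(ρ p' * ![u₁ p', u₂ p', u₃ p'] j *
              (cv * Real.log (T p') - R * Real.log (ρ p')))) p
      ≤ ∑ j : Fin 3,
          pd j (fun p' => (α * μ / ρ p') *
            pd j (fun p'' => -(ρ p'' * (cv * Real.log (T p'') - R * Real.log (ρ p'')))) p') p) := by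
  intro p
  have hρd := hρreg.differentiable (by norm_num)
  have hu₁d := hu₁reg.differentiable (by norm_num)
  have hu₂d := hu₂reg.differentiable (by norm_num)
  have hu₃d := hu₃reg.differentiable (by norm_num)
  have hTd := hTreg.differentiable (by norm_num)
  have hρ0 : ∀ y, ρ y ≠ 0 := fun y => (hρpos y).ne'
  have hT0 : ∀ y, T y ≠ 0 := fun y => (hTpos y).ne'
  have hsl : ∀ y j, DifferentiableAt ℝ (spaceLine y j) (y.1 j) := fun y j =>
    (hasDerivAt_spaceLine y j _).differentiableAt
  have hbalance := entropy_balance (p := p)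
    (S := fun y => -(ρ y * (cv * Real.log (T y) - R * Real.log (ρ y))))
    (F := fun j y => -(ρ y * ![u₁ y, u₂ y, u₃ y] j * (cv * Real.log (T y) - R * Real.log (ρ y))))
    (q := fun k y => consVars cv (ρ y) (u₁ y) (u₂ y) (u₃ y) (T y) k)
    (w := fun k y => entropyVars R cv (ρ y) (u₁ y) (u₂ y) (u₃ y) (T y) k)
    (f := fun j k y => invFlux R cv j (ρ y) (u₁ y) (u₂ y) (u₃ y) (T y) k)
    (ν := fun y => α * μ / ρ y) (M := Mmat R (cv + R) (ρ p) (u₁ p) (u₂ p) (u₃ p) (T p))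
    (deriv_entropy_comp (γ := fun s => (p.1, s)) (by fun_prop) rfl
      (hρd p) (hu₁d p) (hu₂d p) (hu₃d p) (hTd p) (hρ0 p) (hT0 p))
    (fun j y => deriv_entropy_comp (hsl y j) (spaceLine_self y j)
      (hρd y) (hu₁d y) (hu₂d y) (hu₃d y) (hTd y) (hρ0 y) (hT0 y))
    (fun j => deriv_entropyFlux_comp (hsl p j) (spaceLine_self p j)
      (hρd p) (hu₁d p) (hu₂d p) (hu₃d p) (hTd p) (hρ0 p) (hT0 p) j)
    (fun j => deriv_consVars_comp hR.ne' (hsl p j) (spaceLine_self p j)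
      (hρd p) (hu₁d p) (hu₂d p) (hu₃d p) (hTd p) (hρ0 p) (hT0 p))
    (differentiableAt_entropyVars (hρd p) (hu₁d p) (hu₂d p) (hu₃d p) (hTd p) (hρ0 p) (hT0 p))
    (by fun_prop (disch := exact hρ0 p))
    (fun j k => (contDiff_pd (m := 1) (by norm_num)
      (contDiff_consVars hρreg hu₁reg hu₂reg hu₃reg hTreg k)).differentiable one_ne_zero p)
    (fun k => hpde k p)
  refine ⟨hbalance, hbalance.trans_le (sub_le_self _ (Finset.sum_nonneg fun j _ => mul_nonneg ?_ ?_))⟩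
  · exact div_nonneg (mul_pos hα hμ).le (hρpos p).le
  · simpa using (Mmat_posSemidef hR hcv.le (hρpos p).le (hTpos p).le).dotProduct_mulVec_nonneg _
end
end

section
/- Let Ω = (0,1)³ and let ρ, u₁, u₂, u₃, T be twice continuously differentiable on a neighborhood of the closure of Ω × [0, t₁], with ρ > 0 and T > 0, solving the Eulerian model ∂q/∂t + Σ_{j=1}^{3} ∂f_j/∂x_j = Σ_{j=1}^{3} ∂/∂x_j (ν ∂q/∂x_j) with ν = αμ/ρ, α > 0, μ > 0 constants. Then for every time t the time derivative of the total entropy is bounded by the boundary integral: d/dt ∫_Ω S dx ≤ Σ_{j=1}^{3} [ ∫_{x_j=1} (ν wᵀ ∂q/∂x_j − F_j) dσ − ∫_{x_j=0} (ν wᵀ ∂q/∂x_j − F_j) dσ ], where the face integrals are taken over the corresponding faces of the unit cube. -/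
/-!
Contracting the Eulerian system with the entropy variables `w` turns `∂ₜq` and `∂ⱼfⱼ` into
`∂ₜS` and `∂ⱼFⱼ` (Gibbs relation `dS = w · dq`, and `w · dfⱼ = dFⱼ`), while the product rule turns
the viscous term `w · ∂ⱼ(ν ∂ⱼq)` into `∂ⱼ(ν wᵀ ∂ⱼq) - ν ∂ⱼw · ∂ⱼq`. The dissipation
`∂ⱼw · ∂ⱼq = R (∂ⱼρ)² / ρ + ρ |∂ⱼu|² / T + ρ c_v (∂ⱼT)² / T²` is nonnegative, so
`∂ₜS ≤ Σⱼ ∂ⱼ(ν wᵀ ∂ⱼq - Fⱼ)` pointwise. Differentiating under the integral sign and applying the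
divergence theorem on the cube turns this into the boundary bound.
-/

open Matrix

noncomputable section

open MeasureTheory

/-- Boundary integrand in direction `x_j`: `ν wᵀ ∂q/∂x_j - F_j`, with
`ν = αμ/ρ`, entropy variables `w`, conservative variables `q` and entropy flux
`F_j = -ρ u_j s`. -/
def bdryIntegrand (R cv α μ : ℝ) (ρ u₁ u₂ u₃ T : (Fin 3 → ℝ) × ℝ → ℝ)
    (j : Fin 3) (p : (Fin 3 → ℝ) × ℝ) : ℝ :=
  (∑ k : Fin 5, (α * μ / ρ p) * entropyVars R cv (ρ p) (u₁ p) (u₂ p) (u₃ p) (T p) k *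
      pd j (fun p' => consVars cv (ρ p') (u₁ p') (u₂ p') (u₃ p') (T p') k) p)
    - (-(ρ p * ![u₁ p, u₂ p, u₃ p] j * (cv * Real.log (T p) - R * Real.log (ρ p))))

namespace EulerianEntropy

theorem pd_eq_lineDeriv_slice (j : Fin 3) (f : (Fin 3 → ℝ) × ℝ → ℝ) (p : (Fin 3 → ℝ) × ℝ) :
    pd j f p = lineDeriv ℝ (fun y => f (y, p.2)) p.1 (Pi.single j 1) := by
  have hline : (fun s : ℝ => f (p.1 + s • Pi.single j 1, p.2)) =
      fun s => (fun s => f (Function.update p.1 j s, p.2)) (p.1 j + s) := by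
    funext s
    congr 2
    ext i
    rcases eq_or_ne i j with rfl | hi <;> simp [Function.update_of_ne, *]
  rw [lineDeriv, hline, deriv_comp_const_add (f := fun s => f (Function.update p.1 j s, p.2)),
    add_zero, pd]

theorem pd_eq_lineDeriv (j : Fin 3) (f : (Fin 3 → ℝ) × ℝ → ℝ) (p : (Fin 3 → ℝ) × ℝ) :
    pd j f p = lineDeriv ℝ f p (Pi.single j 1, 0) := by
  obtain ⟨x, τ⟩ := p
  simp [pd_eq_lineDeriv_slice, lineDeriv]

theorem pt_eq_lineDeriv (f : (Fin 3 → ℝ) × ℝ → ℝ) (p : (Fin 3 → ℝ) × ℝ) :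
    pt f p = lineDeriv ℝ f p (0, 1) := by
  obtain ⟨x, τ⟩ := p
  rw [lineDeriv, pt]
  simpa using (deriv_comp_const_add (f := fun s => f (x, s)) (a := τ) (x := 0)).symm

-- The differentials of `consVars`, `entropyVars` and `invFlux` at the state `(ρ, u, T)`,
-- applied to the increment `(dρ, du, dT)`.
def consVarsDeriv (cv ρ u₁ u₂ u₃ T dρ du₁ du₂ du₃ dT : ℝ) : Fin 5 → ℝ :=
  ![dρ, dρ * u₁ + ρ * du₁, dρ * u₂ + ρ * du₂, dρ * u₃ + ρ * du₃,
    dρ * (cv * T + (u₁ ^ 2 + u₂ ^ 2 + u₃ ^ 2) / 2)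
      + ρ * (cv * dT + (u₁ * du₁ + u₂ * du₂ + u₃ * du₃))]

def entropyVarsDeriv (R cv ρ u₁ u₂ u₃ T dρ du₁ du₂ du₃ dT : ℝ) : Fin 5 → ℝ :=
  ![-(cv * dT / T - R * dρ / ρ)
      - ((u₁ * du₁ + u₂ * du₂ + u₃ * du₃) / T - (u₁ ^ 2 + u₂ ^ 2 + u₃ ^ 2) * dT / (2 * T ^ 2)),
    (du₁ * T - u₁ * dT) / T ^ 2, (du₂ * T - u₂ * dT) / T ^ 2, (du₃ * T - u₃ * dT) / T ^ 2,
    dT / T ^ 2]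

def invFluxDeriv (R cv : ℝ) (j : Fin 3) (ρ u₁ u₂ u₃ T dρ du₁ du₂ du₃ dT : ℝ) : Fin 5 → ℝ :=
  let u := ![u₁, u₂, u₃] j
  let du := ![du₁, du₂, du₃] j
  let E := cv * T + (u₁ ^ 2 + u₂ ^ 2 + u₃ ^ 2) / 2
  let dE := cv * dT + (u₁ * du₁ + u₂ * du₂ + u₃ * du₃)
  let dp := (dρ * T + ρ * dT) * R
  ![dρ * u + ρ * du,
    (dρ * u + ρ * du) * u₁ + ρ * u * du₁ + (if j = 0 then dp else 0),
    (dρ * u + ρ * du) * u₂ + ρ * u * du₂ + (if j = 1 then dp else 0),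
    (dρ * u + ρ * du) * u₃ + ρ * u * du₃ + (if j = 2 then dp else 0),
    du * (ρ * E + ρ * R * T) + u * (dρ * E + ρ * dE + dp)]

section Curves

variable {R cv : ℝ} {ρ u₁ u₂ u₃ T : ℝ → ℝ} {dρ du₁ du₂ du₃ dT s : ℝ}

theorem hasDerivAt_specificEnergy (hu₁ : HasDerivAt u₁ du₁ s) (hu₂ : HasDerivAt u₂ du₂ s)
    (hu₃ : HasDerivAt u₃ du₃ s) (hT : HasDerivAt T dT s) :
    HasDerivAt (fun s => cv * T s + (u₁ s ^ 2 + u₂ s ^ 2 + u₃ s ^ 2) / 2)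
      (cv * dT + (u₁ s * du₁ + u₂ s * du₂ + u₃ s * du₃)) s :=
  ((hT.const_mul cv).add ((((hu₁.pow 2).add (hu₂.pow 2)).add (hu₃.pow 2)).div_const 2))
    |>.congr_deriv (by ring)

theorem hasDerivAt_consVars (hρ : HasDerivAt ρ dρ s) (hu₁ : HasDerivAt u₁ du₁ s)
    (hu₂ : HasDerivAt u₂ du₂ s) (hu₃ : HasDerivAt u₃ du₃ s) (hT : HasDerivAt T dT s)
    (k : Fin 5) :
    HasDerivAt (fun s => consVars cv (ρ s) (u₁ s) (u₂ s) (u₃ s) (T s) k)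
      (consVarsDeriv cv (ρ s) (u₁ s) (u₂ s) (u₃ s) (T s) dρ du₁ du₂ du₃ dT k) s := by
  fin_cases k
  · exact hρ
  · exact hρ.mul hu₁
  · exact hρ.mul hu₂
  · exact hρ.mul hu₃
  · exact hρ.mul (hasDerivAt_specificEnergy hu₁ hu₂ hu₃ hT)

theorem hasDerivAt_entropyVars (hρ : HasDerivAt ρ dρ s) (hu₁ : HasDerivAt u₁ du₁ s)
    (hu₂ : HasDerivAt u₂ du₂ s) (hu₃ : HasDerivAt u₃ du₃ s) (hT : HasDerivAt T dT s)
    (hρ₀ : ρ s ≠ 0) (hT₀ : T s ≠ 0) (k : Fin 5) :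
    HasDerivAt (fun s => entropyVars R cv (ρ s) (u₁ s) (u₂ s) (u₃ s) (T s) k)
      (entropyVarsDeriv R cv (ρ s) (u₁ s) (u₂ s) (u₃ s) (T s) dρ du₁ du₂ du₃ dT k) s := by
  fin_cases k
  · refine ((((hT.const_mul (cv + R)).div hT hT₀).sub
        (((hT.log hT₀).const_mul cv).sub ((hρ.log hρ₀).const_mul R))).sub
      ((((hu₁.pow 2).add (hu₂.pow 2)).add (hu₃.pow 2)).div (hT.const_mul 2)
        (mul_ne_zero two_ne_zero hT₀))).congr_deriv ?_
    simp only [entropyVarsDeriv, Fin.zero_eta, Fin.isValue, Matrix.cons_val_zero, Pi.add_apply,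
      Pi.pow_apply]
    field_simp
    ring
  · exact hu₁.div hT hT₀
  · exact hu₂.div hT hT₀
  · exact hu₃.div hT hT₀
  · exact ((hasDerivAt_const s (1 : ℝ)).div hT hT₀).neg.congr_deriv (by
      simp only [entropyVarsDeriv, Fin.reduceFinMk, Matrix.cons_val]
      ring)

theorem hasDerivAt_invFlux (hρ : HasDerivAt ρ dρ s) (hu₁ : HasDerivAt u₁ du₁ s)
    (hu₂ : HasDerivAt u₂ du₂ s) (hu₃ : HasDerivAt u₃ du₃ s) (hT : HasDerivAt T dT s)
    (j : Fin 3) (k : Fin 5) :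
    HasDerivAt (fun s => invFlux R cv j (ρ s) (u₁ s) (u₂ s) (u₃ s) (T s) k)
      (invFluxDeriv R cv j (ρ s) (u₁ s) (u₂ s) (u₃ s) (T s) dρ du₁ du₂ du₃ dT k) s := by
  have hE := hasDerivAt_specificEnergy (cv := cv) hu₁ hu₂ hu₃ hT
  have hp : HasDerivAt (fun s => ρ s * R * T s) ((dρ * T s + ρ s * dT) * R) s :=
    ((hρ.mul_const R).mul hT).congr_deriv (by ring)
  fin_cases j <;> fin_cases k <;>
    simp only [invFlux, invFluxDeriv, Fin.zero_eta, Fin.mk_one, Fin.reduceFinMk, Fin.isValue,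
      Matrix.cons_val_zero, Matrix.cons_val_one, Matrix.cons_val, Fin.reduceEq, reduceIte,
      zero_ne_one, one_ne_zero, add_zero]
  · exact hρ.mul hu₁
  · exact ((hρ.mul hu₁).mul hu₁).add hp
  · exact (hρ.mul hu₁).mul hu₂
  · exact (hρ.mul hu₁).mul hu₃
  · exact hu₁.mul ((hρ.mul hE).add hp)
  · exact hρ.mul hu₂
  · exact (hρ.mul hu₂).mul hu₁
  · exact ((hρ.mul hu₂).mul hu₂).add hp
  · exact (hρ.mul hu₂).mul hu₃
  · exact hu₂.mul ((hρ.mul hE).add hp)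
  · exact hρ.mul hu₃
  · exact (hρ.mul hu₃).mul hu₁
  · exact (hρ.mul hu₃).mul hu₂
  · exact ((hρ.mul hu₃).mul hu₃).add hp
  · exact hu₃.mul ((hρ.mul hE).add hp)

theorem hasDerivAt_entropy (hρ : HasDerivAt ρ dρ s) (hT : HasDerivAt T dT s)
    (hρ₀ : ρ s ≠ 0) (hT₀ : T s ≠ 0) :
    HasDerivAt (fun s => -(ρ s * (cv * Real.log (T s) - R * Real.log (ρ s))))
      (∑ k, entropyVars R cv (ρ s) (u₁ s) (u₂ s) (u₃ s) (T s) k *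
        consVarsDeriv cv (ρ s) (u₁ s) (u₂ s) (u₃ s) (T s) dρ du₁ du₂ du₃ dT k) s := by
  refine (hρ.mul (((hT.log hT₀).const_mul cv).sub ((hρ.log hρ₀).const_mul R))).neg.congr_deriv ?_
  simp only [Fin.sum_univ_five, entropyVars, consVarsDeriv, Fin.isValue, Matrix.cons_val_zero,
    Matrix.cons_val_one, Matrix.cons_val, Pi.sub_apply]
  field_simp
  ring

theorem hasDerivAt_entropyFlux (hρ : HasDerivAt ρ dρ s) (hu₁ : HasDerivAt u₁ du₁ s)
    (hu₂ : HasDerivAt u₂ du₂ s) (hu₃ : HasDerivAt u₃ du₃ s) (hT : HasDerivAt T dT s)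
    (hρ₀ : ρ s ≠ 0) (hT₀ : T s ≠ 0) (j : Fin 3) :
    HasDerivAt (fun s => -(ρ s * ![u₁ s, u₂ s, u₃ s] j *
        (cv * Real.log (T s) - R * Real.log (ρ s))))
      (∑ k, entropyVars R cv (ρ s) (u₁ s) (u₂ s) (u₃ s) (T s) k *
        invFluxDeriv R cv j (ρ s) (u₁ s) (u₂ s) (u₃ s) (T s) dρ du₁ du₂ du₃ dT k) s := by
  have hu : HasDerivAt (fun s => ![u₁ s, u₂ s, u₃ s] j) (![du₁, du₂, du₃] j) s := by
    fin_cases j <;> assumption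
  refine ((hρ.mul hu).mul
    (((hT.log hT₀).const_mul cv).sub ((hρ.log hρ₀).const_mul R))).neg.congr_deriv ?_
  fin_cases j <;>
  · simp only [Fin.sum_univ_five, entropyVars, invFluxDeriv, Fin.zero_eta, Fin.mk_one,
      Fin.reduceFinMk, Fin.isValue, Matrix.cons_val_zero, Matrix.cons_val_one, Matrix.cons_val,
      Fin.reduceEq, reduceIte, zero_ne_one, one_ne_zero, add_zero, Pi.sub_apply, Pi.mul_apply]
    field_simp
    ring

end Curves

theorem sum_entropyVarsDeriv_mul_consVarsDeriv_nonneg {R cv ρ u₁ u₂ u₃ T : ℝ}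
    (dρ du₁ du₂ du₃ dT : ℝ) (hR : 0 ≤ R) (hcv : 0 ≤ cv) (hρ : 0 < ρ) (hT : 0 < T) :
    0 ≤ ∑ k, entropyVarsDeriv R cv ρ u₁ u₂ u₃ T dρ du₁ du₂ du₃ dT k *
      consVarsDeriv cv ρ u₁ u₂ u₃ T dρ du₁ du₂ du₃ dT k := by
  have hform : ∑ k, entropyVarsDeriv R cv ρ u₁ u₂ u₃ T dρ du₁ du₂ du₃ dT k *
      consVarsDeriv cv ρ u₁ u₂ u₃ T dρ du₁ du₂ du₃ dT k =
      R * dρ ^ 2 / ρ + ρ * (du₁ ^ 2 + du₂ ^ 2 + du₃ ^ 2) / T + ρ * cv * dT ^ 2 / T ^ 2 := by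
    simp only [Fin.sum_univ_five, entropyVarsDeriv, consVarsDeriv, Fin.isValue,
      Matrix.cons_val_zero, Matrix.cons_val_one, Matrix.cons_val]
    field_simp
    ring
  rw [hform]
  positivity

section Directional

variable {E : Type*} [AddCommGroup E] [Module ℝ E] {R cv : ℝ} {ρ u₁ u₂ u₃ T : E → ℝ} {p e : E}

theorem hasLineDerivAt_consVars (hρ : LineDifferentiableAt ℝ ρ p e)
    (hu₁ : LineDifferentiableAt ℝ u₁ p e) (hu₂ : LineDifferentiableAt ℝ u₂ p e)
    (hu₃ : LineDifferentiableAt ℝ u₃ p e) (hT : LineDifferentiableAt ℝ T p e) (k : Fin 5) :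
    HasLineDerivAt ℝ (fun x => consVars cv (ρ x) (u₁ x) (u₂ x) (u₃ x) (T x) k)
      (consVarsDeriv cv (ρ p) (u₁ p) (u₂ p) (u₃ p) (T p) (lineDeriv ℝ ρ p e)
        (lineDeriv ℝ u₁ p e) (lineDeriv ℝ u₂ p e) (lineDeriv ℝ u₃ p e) (lineDeriv ℝ T p e) k)
      p e := by
  simpa only [HasLineDerivAt, zero_smul, add_zero] using
    hasDerivAt_consVars (cv := cv) hρ.hasLineDerivAt hu₁.hasLineDerivAt hu₂.hasLineDerivAt
      hu₃.hasLineDerivAt hT.hasLineDerivAt k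

theorem hasLineDerivAt_entropyVars (hρ : LineDifferentiableAt ℝ ρ p e)
    (hu₁ : LineDifferentiableAt ℝ u₁ p e) (hu₂ : LineDifferentiableAt ℝ u₂ p e)
    (hu₃ : LineDifferentiableAt ℝ u₃ p e) (hT : LineDifferentiableAt ℝ T p e)
    (hρ₀ : ρ p ≠ 0) (hT₀ : T p ≠ 0) (k : Fin 5) :
    HasLineDerivAt ℝ (fun x => entropyVars R cv (ρ x) (u₁ x) (u₂ x) (u₃ x) (T x) k)
      (entropyVarsDeriv R cv (ρ p) (u₁ p) (u₂ p) (u₃ p) (T p) (lineDeriv ℝ ρ p e)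
        (lineDeriv ℝ u₁ p e) (lineDeriv ℝ u₂ p e) (lineDeriv ℝ u₃ p e) (lineDeriv ℝ T p e) k)
      p e := by
  simpa only [HasLineDerivAt, zero_smul, add_zero] using
    hasDerivAt_entropyVars (R := R) (cv := cv) hρ.hasLineDerivAt hu₁.hasLineDerivAt
      hu₂.hasLineDerivAt hu₃.hasLineDerivAt hT.hasLineDerivAt (by simpa using hρ₀)
      (by simpa using hT₀) k

theorem hasLineDerivAt_invFlux (hρ : LineDifferentiableAt ℝ ρ p e)
    (hu₁ : LineDifferentiableAt ℝ u₁ p e) (hu₂ : LineDifferentiableAt ℝ u₂ p e)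
    (hu₃ : LineDifferentiableAt ℝ u₃ p e) (hT : LineDifferentiableAt ℝ T p e)
    (j : Fin 3) (k : Fin 5) :
    HasLineDerivAt ℝ (fun x => invFlux R cv j (ρ x) (u₁ x) (u₂ x) (u₃ x) (T x) k)
      (invFluxDeriv R cv j (ρ p) (u₁ p) (u₂ p) (u₃ p) (T p) (lineDeriv ℝ ρ p e)
        (lineDeriv ℝ u₁ p e) (lineDeriv ℝ u₂ p e) (lineDeriv ℝ u₃ p e) (lineDeriv ℝ T p e) k)
      p e := by
  simpa only [HasLineDerivAt, zero_smul, add_zero] using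
    hasDerivAt_invFlux (R := R) (cv := cv) hρ.hasLineDerivAt hu₁.hasLineDerivAt
      hu₂.hasLineDerivAt hu₃.hasLineDerivAt hT.hasLineDerivAt j k

theorem lineDeriv_entropy (hρ : LineDifferentiableAt ℝ ρ p e)
    (hu₁ : LineDifferentiableAt ℝ u₁ p e) (hu₂ : LineDifferentiableAt ℝ u₂ p e)
    (hu₃ : LineDifferentiableAt ℝ u₃ p e) (hT : LineDifferentiableAt ℝ T p e)
    (hρ₀ : ρ p ≠ 0) (hT₀ : T p ≠ 0) :
    lineDeriv ℝ (fun x => -(ρ x * (cv * Real.log (T x) - R * Real.log (ρ x)))) p e =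
      ∑ k, entropyVars R cv (ρ p) (u₁ p) (u₂ p) (u₃ p) (T p) k *
        lineDeriv ℝ (fun x => consVars cv (ρ x) (u₁ x) (u₂ x) (u₃ x) (T x) k) p e := by
  have hS : HasLineDerivAt ℝ (fun x => -(ρ x * (cv * Real.log (T x) - R * Real.log (ρ x))))
      (∑ k, entropyVars R cv (ρ p) (u₁ p) (u₂ p) (u₃ p) (T p) k *
        consVarsDeriv cv (ρ p) (u₁ p) (u₂ p) (u₃ p) (T p) (lineDeriv ℝ ρ p e)
          (lineDeriv ℝ u₁ p e) (lineDeriv ℝ u₂ p e) (lineDeriv ℝ u₃ p e) (lineDeriv ℝ T p e) k)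
      p e := by
    simpa only [HasLineDerivAt, zero_smul, add_zero] using
      hasDerivAt_entropy (u₁ := fun t => u₁ (p + t • e)) (u₂ := fun t => u₂ (p + t • e))
        (u₃ := fun t => u₃ (p + t • e)) hρ.hasLineDerivAt hT.hasLineDerivAt
        (by simpa using hρ₀) (by simpa using hT₀)
  rw [hS.lineDeriv]
  exact Finset.sum_congr rfl fun k _ => by
    rw [(hasLineDerivAt_consVars hρ hu₁ hu₂ hu₃ hT k).lineDeriv]

theorem lineDeriv_entropyFlux (hρ : LineDifferentiableAt ℝ ρ p e)
    (hu₁ : LineDifferentiableAt ℝ u₁ p e) (hu₂ : LineDifferentiableAt ℝ u₂ p e)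
    (hu₃ : LineDifferentiableAt ℝ u₃ p e) (hT : LineDifferentiableAt ℝ T p e)
    (hρ₀ : ρ p ≠ 0) (hT₀ : T p ≠ 0) (j : Fin 3) :
    lineDeriv ℝ (fun x => -(ρ x * ![u₁ x, u₂ x, u₃ x] j *
        (cv * Real.log (T x) - R * Real.log (ρ x)))) p e =
      ∑ k, entropyVars R cv (ρ p) (u₁ p) (u₂ p) (u₃ p) (T p) k *
        lineDeriv ℝ (fun x => invFlux R cv j (ρ x) (u₁ x) (u₂ x) (u₃ x) (T x) k) p e := by
  have hF : HasLineDerivAt ℝ (fun x => -(ρ x * ![u₁ x, u₂ x, u₃ x] j *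
        (cv * Real.log (T x) - R * Real.log (ρ x))))
      (∑ k, entropyVars R cv (ρ p) (u₁ p) (u₂ p) (u₃ p) (T p) k *
        invFluxDeriv R cv j (ρ p) (u₁ p) (u₂ p) (u₃ p) (T p) (lineDeriv ℝ ρ p e)
          (lineDeriv ℝ u₁ p e) (lineDeriv ℝ u₂ p e) (lineDeriv ℝ u₃ p e) (lineDeriv ℝ T p e) k)
      p e := by
    simpa only [HasLineDerivAt, zero_smul, add_zero] using
      hasDerivAt_entropyFlux hρ.hasLineDerivAt hu₁.hasLineDerivAt hu₂.hasLineDerivAt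
        hu₃.hasLineDerivAt hT.hasLineDerivAt (by simpa using hρ₀) (by simpa using hT₀) j
  rw [hF.lineDeriv]
  exact Finset.sum_congr rfl fun k _ => by
    rw [(hasLineDerivAt_invFlux hρ hu₁ hu₂ hu₃ hT j k).lineDeriv]

theorem lineDeriv_entropyVars_mul_lineDeriv_consVars_nonneg (hρ : LineDifferentiableAt ℝ ρ p e)
    (hu₁ : LineDifferentiableAt ℝ u₁ p e) (hu₂ : LineDifferentiableAt ℝ u₂ p e)
    (hu₃ : LineDifferentiableAt ℝ u₃ p e) (hT : LineDifferentiableAt ℝ T p e)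
    (hR : 0 ≤ R) (hcv : 0 ≤ cv) (hρ₀ : 0 < ρ p) (hT₀ : 0 < T p) :
    0 ≤ ∑ k, lineDeriv ℝ (fun x => entropyVars R cv (ρ x) (u₁ x) (u₂ x) (u₃ x) (T x) k) p e *
      lineDeriv ℝ (fun x => consVars cv (ρ x) (u₁ x) (u₂ x) (u₃ x) (T x) k) p e := by
  simp only [(hasLineDerivAt_entropyVars hρ hu₁ hu₂ hu₃ hT hρ₀.ne' hT₀.ne' _).lineDeriv,
    (hasLineDerivAt_consVars hρ hu₁ hu₂ hu₃ hT _).lineDeriv]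
  exact sum_entropyVarsDeriv_mul_consVarsDeriv_nonneg _ _ _ _ _ hR hcv hρ₀ hT₀

end Directional

section Regularity

variable {E : Type*} [NormedAddCommGroup E] [NormedSpace ℝ E] {R cv : ℝ} {n : WithTop ℕ∞}
  {ρ u₁ u₂ u₃ T : E → ℝ} {U : Set E}

theorem contDiffOn_lineDeriv {m : WithTop ℕ∞} {f : E → ℝ} (hU : IsOpen U)
    (hf : ContDiffOn ℝ n f U) (hmn : m + 1 ≤ n) (e : E) :
    ContDiffOn ℝ m (fun x => lineDeriv ℝ f x e) U := by
  have hfd : ContDiffOn ℝ m (fun x => fderiv ℝ f x e) U :=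
    (ContinuousLinearMap.apply ℝ ℝ e).contDiff.comp_contDiffOn (hf.fderiv_of_isOpen hU hmn)
  refine hfd.congr fun x hx => ?_
  have hn : n ≠ 0 := ne_bot_of_le_ne_bot (by simp) hmn
  exact ((hf.differentiableOn hn).differentiableAt
    (hU.mem_nhds hx)).lineDeriv_eq_fderiv

theorem contDiffOn_consVars (hρ : ContDiffOn ℝ n ρ U) (hu₁ : ContDiffOn ℝ n u₁ U)
    (hu₂ : ContDiffOn ℝ n u₂ U) (hu₃ : ContDiffOn ℝ n u₃ U) (hT : ContDiffOn ℝ n T U)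
    (k : Fin 5) : ContDiffOn ℝ n (fun x => consVars cv (ρ x) (u₁ x) (u₂ x) (u₃ x) (T x) k) U := by
  fin_cases k <;>
    simp only [consVars, Fin.zero_eta, Fin.mk_one, Fin.reduceFinMk, Fin.isValue,
      Matrix.cons_val_zero, Matrix.cons_val_one, Matrix.cons_val] <;>
    fun_prop

theorem contDiffOn_entropyVars (hρ : ContDiffOn ℝ n ρ U) (hu₁ : ContDiffOn ℝ n u₁ U)
    (hu₂ : ContDiffOn ℝ n u₂ U) (hu₃ : ContDiffOn ℝ n u₃ U) (hT : ContDiffOn ℝ n T U)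
    (hρ₀ : ∀ x ∈ U, ρ x ≠ 0) (hT₀ : ∀ x ∈ U, T x ≠ 0) (k : Fin 5) :
    ContDiffOn ℝ n (fun x => entropyVars R cv (ρ x) (u₁ x) (u₂ x) (u₃ x) (T x) k) U := by
  have h2T₀ : ∀ x ∈ U, 2 * T x ≠ 0 := fun x hx => mul_ne_zero two_ne_zero (hT₀ x hx)
  fin_cases k <;>
    simp only [entropyVars, Fin.zero_eta, Fin.mk_one, Fin.reduceFinMk, Fin.isValue,
      Matrix.cons_val_zero, Matrix.cons_val_one, Matrix.cons_val, one_div] <;>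
    fun_prop (disch := assumption)

theorem contDiffOn_entropy (hρ : ContDiffOn ℝ n ρ U) (hT : ContDiffOn ℝ n T U)
    (hρ₀ : ∀ x ∈ U, ρ x ≠ 0) (hT₀ : ∀ x ∈ U, T x ≠ 0) :
    ContDiffOn ℝ n (fun x => -(ρ x * (cv * Real.log (T x) - R * Real.log (ρ x)))) U := by
  fun_prop (disch := assumption)

theorem contDiffOn_entropyFlux (hρ : ContDiffOn ℝ n ρ U) (hu₁ : ContDiffOn ℝ n u₁ U)
    (hu₂ : ContDiffOn ℝ n u₂ U) (hu₃ : ContDiffOn ℝ n u₃ U) (hT : ContDiffOn ℝ n T U)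
    (hρ₀ : ∀ x ∈ U, ρ x ≠ 0) (hT₀ : ∀ x ∈ U, T x ≠ 0) (j : Fin 3) :
    ContDiffOn ℝ n (fun x => -(ρ x * ![u₁ x, u₂ x, u₃ x] j *
      (cv * Real.log (T x) - R * Real.log (ρ x)))) U := by
  fin_cases j <;>
    simp only [Fin.zero_eta, Fin.mk_one, Fin.reduceFinMk, Fin.isValue, Matrix.cons_val_zero,
      Matrix.cons_val_one, Matrix.cons_val] <;>
    fun_prop (disch := assumption)

end Regularity

structure IsRegularState {E : Type*} [NormedAddCommGroup E] [NormedSpace ℝ E] (U : Set E)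
    (ρ u₁ u₂ u₃ T : E → ℝ) : Prop where
  isOpen : IsOpen U
  contDiffOn_ρ : ContDiffOn ℝ 2 ρ U
  contDiffOn_u₁ : ContDiffOn ℝ 2 u₁ U
  contDiffOn_u₂ : ContDiffOn ℝ 2 u₂ U
  contDiffOn_u₃ : ContDiffOn ℝ 2 u₃ U
  contDiffOn_T : ContDiffOn ℝ 2 T U
  pos : ∀ p ∈ U, 0 < ρ p ∧ 0 < T p

namespace IsRegularState

variable {E : Type*} [NormedAddCommGroup E] [NormedSpace ℝ E] {U : Set E}
  {ρ u₁ u₂ u₃ T : E → ℝ} {p : E}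

theorem lineDifferentiableAt (hs : IsRegularState U ρ u₁ u₂ u₃ T) (hp : p ∈ U) (e : E) :
    LineDifferentiableAt ℝ ρ p e ∧ LineDifferentiableAt ℝ u₁ p e ∧
      LineDifferentiableAt ℝ u₂ p e ∧ LineDifferentiableAt ℝ u₃ p e ∧
        LineDifferentiableAt ℝ T p e := by
  have hdiff {f : E → ℝ} (hf : ContDiffOn ℝ 2 f U) : LineDifferentiableAt ℝ f p e :=
    ((hf.differentiableOn two_ne_zero).differentiableAt
      (hs.isOpen.mem_nhds hp)).lineDifferentiableAt
  exact ⟨hdiff hs.contDiffOn_ρ, hdiff hs.contDiffOn_u₁, hdiff hs.contDiffOn_u₂,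
    hdiff hs.contDiffOn_u₃, hdiff hs.contDiffOn_T⟩

theorem contDiffOn_one (hs : IsRegularState U ρ u₁ u₂ u₃ T) :
    ContDiffOn ℝ 1 ρ U ∧ ContDiffOn ℝ 1 u₁ U ∧ ContDiffOn ℝ 1 u₂ U ∧ ContDiffOn ℝ 1 u₃ U ∧
      ContDiffOn ℝ 1 T U :=
  ⟨hs.contDiffOn_ρ.of_le one_le_two, hs.contDiffOn_u₁.of_le one_le_two,
    hs.contDiffOn_u₂.of_le one_le_two, hs.contDiffOn_u₃.of_le one_le_two,
    hs.contDiffOn_T.of_le one_le_two⟩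

end IsRegularState

def viscousFlux (cv α μ : ℝ) (ρ u₁ u₂ u₃ T : (Fin 3 → ℝ) × ℝ → ℝ) (j : Fin 3) (k : Fin 5)
    (p : (Fin 3 → ℝ) × ℝ) : ℝ :=
  α * μ / ρ p * pd j (fun p' => consVars cv (ρ p') (u₁ p') (u₂ p') (u₃ p') (T p') k) p

def SolvesEulerianModel (R cv α μ : ℝ) (ρ u₁ u₂ u₃ T : (Fin 3 → ℝ) × ℝ → ℝ)
    (U : Set ((Fin 3 → ℝ) × ℝ)) : Prop :=
  ∀ (k : Fin 5), ∀ p ∈ U,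
    pt (fun p' => consVars cv (ρ p') (u₁ p') (u₂ p') (u₃ p') (T p') k) p
      + ∑ j : Fin 3, pd j (fun p' => invFlux R cv j (ρ p') (u₁ p') (u₂ p') (u₃ p') (T p') k) p
    = ∑ j : Fin 3, pd j (viscousFlux cv α μ ρ u₁ u₂ u₃ T j k) p

section Model

variable {R cv α μ : ℝ} {ρ u₁ u₂ u₃ T : (Fin 3 → ℝ) × ℝ → ℝ} {U : Set ((Fin 3 → ℝ) × ℝ)}

theorem viscousFlux_eq (j : Fin 3) (k : Fin 5) :
    viscousFlux cv α μ ρ u₁ u₂ u₃ T j k = fun p => α * μ / ρ p *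
      lineDeriv ℝ (fun p' => consVars cv (ρ p') (u₁ p') (u₂ p') (u₃ p') (T p') k) p
        (Pi.single j 1, 0) := by
  funext p
  rw [viscousFlux, pd_eq_lineDeriv]

theorem bdryIntegrand_eq (j : Fin 3) :
    bdryIntegrand R cv α μ ρ u₁ u₂ u₃ T j = fun p =>
      ∑ k, entropyVars R cv (ρ p) (u₁ p) (u₂ p) (u₃ p) (T p) k *
        viscousFlux cv α μ ρ u₁ u₂ u₃ T j k p
      - -(ρ p * ![u₁ p, u₂ p, u₃ p] j * (cv * Real.log (T p) - R * Real.log (ρ p))) := by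
  funext p
  simp only [bdryIntegrand, viscousFlux]
  congr 1
  exact Finset.sum_congr rfl fun k _ => by ring

theorem contDiffOn_viscousFlux (hs : IsRegularState U ρ u₁ u₂ u₃ T) (j : Fin 3) (k : Fin 5) :
    ContDiffOn ℝ 1 (viscousFlux cv α μ ρ u₁ u₂ u₃ T j k) U := by
  have hq := contDiffOn_lineDeriv hs.isOpen (contDiffOn_consVars (cv := cv) hs.contDiffOn_ρ
    hs.contDiffOn_u₁ hs.contDiffOn_u₂ hs.contDiffOn_u₃ hs.contDiffOn_T k) (m := 1)
    (by norm_num) (Pi.single j 1, 0)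
  have hρ := hs.contDiffOn_one.1
  have hρ₀ : ∀ x ∈ U, ρ x ≠ 0 := fun x hx => (hs.pos x hx).1.ne'
  rw [viscousFlux_eq]
  fun_prop (disch := assumption)

theorem contDiffOn_bdryIntegrand (hs : IsRegularState U ρ u₁ u₂ u₃ T) (j : Fin 3) :
    ContDiffOn ℝ 1 (bdryIntegrand R cv α μ ρ u₁ u₂ u₃ T j) U := by
  obtain ⟨hρ, hu₁, hu₂, hu₃, hT⟩ := hs.contDiffOn_one
  have hρ₀ : ∀ x ∈ U, ρ x ≠ 0 := fun x hx => (hs.pos x hx).1.ne'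
  have hT₀ : ∀ x ∈ U, T x ≠ 0 := fun x hx => (hs.pos x hx).2.ne'
  rw [bdryIntegrand_eq]
  exact (ContDiffOn.sum fun k _ =>
      (contDiffOn_entropyVars hρ hu₁ hu₂ hu₃ hT hρ₀ hT₀ k).mul (contDiffOn_viscousFlux hs j k)).sub
    (contDiffOn_entropyFlux hρ hu₁ hu₂ hu₃ hT hρ₀ hT₀ j)

theorem sum_entropyVars_mul_pd_viscousFlux (hs : IsRegularState U ρ u₁ u₂ u₃ T)
    {p : (Fin 3 → ℝ) × ℝ} (hp : p ∈ U) (j : Fin 3) :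
    ∑ k, entropyVars R cv (ρ p) (u₁ p) (u₂ p) (u₃ p) (T p) k *
        pd j (viscousFlux cv α μ ρ u₁ u₂ u₃ T j k) p =
      pd j (bdryIntegrand R cv α μ ρ u₁ u₂ u₃ T j) p
        + pd j (fun x => -(ρ x * ![u₁ x, u₂ x, u₃ x] j *
            (cv * Real.log (T x) - R * Real.log (ρ x)))) p
        - ∑ k, pd j (fun x => entropyVars R cv (ρ x) (u₁ x) (u₂ x) (u₃ x) (T x) k) p *
            viscousFlux cv α μ ρ u₁ u₂ u₃ T j k p := by
  obtain ⟨hρ, hu₁, hu₂, hu₃, hT⟩ := hs.contDiffOn_one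
  have hρ₀ : ∀ x ∈ U, ρ x ≠ 0 := fun x hx => (hs.pos x hx).1.ne'
  have hT₀ : ∀ x ∈ U, T x ≠ 0 := fun x hx => (hs.pos x hx).2.ne'
  have hderiv {f : (Fin 3 → ℝ) × ℝ → ℝ} (hf : ContDiffOn ℝ 1 f U) :
      HasLineDerivAt ℝ f (pd j f p) p (Pi.single j 1, 0) := by
    rw [pd_eq_lineDeriv]
    exact ((hf.differentiableOn one_ne_zero).differentiableAt
      (hs.isOpen.mem_nhds hp)).lineDifferentiableAt.hasLineDerivAt
  have hw := fun k => hderiv (contDiffOn_entropyVars (R := R) (cv := cv) hρ hu₁ hu₂ hu₃ hT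
    hρ₀ hT₀ k)
  have hv := fun k => hderiv (contDiffOn_viscousFlux (α := α) (μ := μ) (cv := cv) hs j k)
  have hF := hderiv (contDiffOn_entropyFlux (R := R) (cv := cv) hρ hu₁ hu₂ hu₃ hT hρ₀ hT₀ j)
  have hG : HasLineDerivAt ℝ (bdryIntegrand R cv α μ ρ u₁ u₂ u₃ T j)
      (∑ k, (pd j (fun x => entropyVars R cv (ρ x) (u₁ x) (u₂ x) (u₃ x) (T x) k) p *
          viscousFlux cv α μ ρ u₁ u₂ u₃ T j k p +
        entropyVars R cv (ρ p) (u₁ p) (u₂ p) (u₃ p) (T p) k *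
          pd j (viscousFlux cv α μ ρ u₁ u₂ u₃ T j k) p)
        - pd j (fun x => -(ρ x * ![u₁ x, u₂ x, u₃ x] j *
            (cv * Real.log (T x) - R * Real.log (ρ x)))) p) p (Pi.single j 1, 0) := by
    have h := (HasDerivAt.fun_sum (u := Finset.univ) fun k _ => (hw k).mul (hv k)).sub hF
    simp only [zero_smul, add_zero] at h
    rw [bdryIntegrand_eq]
    exact h
  rw [pd_eq_lineDeriv j (bdryIntegrand _ _ _ _ _ _ _ _ _ j), hG.lineDeriv,
    Finset.sum_add_distrib]
  ring

theorem sum_pd_entropyVars_mul_viscousFlux_nonneg (hs : IsRegularState U ρ u₁ u₂ u₃ T)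
    (hR : 0 ≤ R) (hcv : 0 ≤ cv) (hν : 0 ≤ α * μ) {p : (Fin 3 → ℝ) × ℝ} (hp : p ∈ U)
    (j : Fin 3) :
    0 ≤ ∑ k, pd j (fun x => entropyVars R cv (ρ x) (u₁ x) (u₂ x) (u₃ x) (T x) k) p *
      viscousFlux cv α μ ρ u₁ u₂ u₃ T j k p := by
  obtain ⟨hρ, hu₁, hu₂, hu₃, hT⟩ := hs.lineDifferentiableAt hp (Pi.single j 1, 0)
  have hdiss := lineDeriv_entropyVars_mul_lineDeriv_consVars_nonneg hρ hu₁ hu₂ hu₃ hT hR hcv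
    (hs.pos p hp).1 (hs.pos p hp).2
  simp only [viscousFlux, pd_eq_lineDeriv, mul_left_comm _ (α * μ / ρ p), ← Finset.mul_sum]
  exact mul_nonneg (div_nonneg hν (hs.pos p hp).1.le) hdiss

theorem pt_entropy_le_sum_pd_bdryIntegrand (hs : IsRegularState U ρ u₁ u₂ u₃ T)
    (hR : 0 ≤ R) (hcv : 0 ≤ cv) (hν : 0 ≤ α * μ)
    (hpde : SolvesEulerianModel R cv α μ ρ u₁ u₂ u₃ T U) {p : (Fin 3 → ℝ) × ℝ} (hp : p ∈ U) :
    pt (fun x => -(ρ x * (cv * Real.log (T x) - R * Real.log (ρ x)))) p ≤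
      ∑ j, pd j (bdryIntegrand R cv α μ ρ u₁ u₂ u₃ T j) p := by
  have hρ₀ := (hs.pos p hp).1.ne'
  have hT₀ := (hs.pos p hp).2.ne'
  have hentropy : pt (fun x => -(ρ x * (cv * Real.log (T x) - R * Real.log (ρ x)))) p =
      ∑ k, entropyVars R cv (ρ p) (u₁ p) (u₂ p) (u₃ p) (T p) k *
        pt (fun x => consVars cv (ρ x) (u₁ x) (u₂ x) (u₃ x) (T x) k) p := by
    obtain ⟨hρ, hu₁, hu₂, hu₃, hT⟩ := hs.lineDifferentiableAt hp (0, 1)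
    simp only [pt_eq_lineDeriv]
    exact lineDeriv_entropy hρ hu₁ hu₂ hu₃ hT hρ₀ hT₀
  have hflux (j : Fin 3) : pd j (fun x => -(ρ x * ![u₁ x, u₂ x, u₃ x] j *
        (cv * Real.log (T x) - R * Real.log (ρ x)))) p =
      ∑ k, entropyVars R cv (ρ p) (u₁ p) (u₂ p) (u₃ p) (T p) k *
        pd j (fun x => invFlux R cv j (ρ x) (u₁ x) (u₂ x) (u₃ x) (T x) k) p := by
    obtain ⟨hρ, hu₁, hu₂, hu₃, hT⟩ := hs.lineDifferentiableAt hp (Pi.single j 1, 0)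
    simp only [pd_eq_lineDeriv]
    exact lineDeriv_entropyFlux hρ hu₁ hu₂ hu₃ hT hρ₀ hT₀ j
  have hbalance : pt (fun x => -(ρ x * (cv * Real.log (T x) - R * Real.log (ρ x)))) p =
      ∑ j, (∑ k, entropyVars R cv (ρ p) (u₁ p) (u₂ p) (u₃ p) (T p) k *
          pd j (viscousFlux cv α μ ρ u₁ u₂ u₃ T j k) p
        - ∑ k, entropyVars R cv (ρ p) (u₁ p) (u₂ p) (u₃ p) (T p) k *
          pd j (fun x => invFlux R cv j (ρ x) (u₁ x) (u₂ x) (u₃ x) (T x) k) p) := by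
    rw [hentropy, Finset.sum_congr rfl fun k _ => by rw [eq_sub_of_add_eq (hpde k p hp)]]
    simp only [mul_sub, Finset.mul_sum, Finset.sum_sub_distrib]
    rw [Finset.sum_comm, Finset.sum_comm (s := Finset.univ (α := Fin 5))]
  rw [hbalance]
  refine Finset.sum_le_sum fun j _ => ?_
  rw [← hflux j, sum_entropyVars_mul_pd_viscousFlux hs hp j]
  linarith [sum_pd_entropyVars_mul_viscousFlux_nonneg hs hR hcv hν hp j]

end Model

theorem exists_prod_closedBall_subset {X : Type*} [TopologicalSpace X] {K : Set X}
    {U : Set (X × ℝ)} {t : ℝ} (hK : IsCompact K) (hU : IsOpen U) (hKU : K ×ˢ {t} ⊆ U) :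
    ∃ δ > 0, K ×ˢ Metric.closedBall t δ ⊆ U := by
  obtain ⟨u, v, -, hv, hKu, htv, huv⟩ := generalized_tube_lemma hK isCompact_singleton hU hKU
  obtain ⟨δ, hδ, hball⟩ := Metric.isOpen_iff.1 hv t (htv rfl)
  exact ⟨δ / 2, half_pos hδ, (Set.prod_mono hKu
    ((Metric.closedBall_subset_ball (half_lt_self hδ)).trans hball)).trans huv⟩

theorem hasDerivAt_setIntegral_of_contDiffOn {E : Type*} [NormedAddCommGroup E]
    [NormedSpace ℝ E] [MeasurableSpace E] [OpensMeasurableSpace E] {μ : Measure E}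
    [IsFiniteMeasureOnCompacts μ] {K s : Set E} {U : Set (E × ℝ)} {f : E × ℝ → ℝ} {t : ℝ}
    (hK : IsCompact K) (hs : MeasurableSet s) (hsK : s ⊆ K) (hU : IsOpen U)
    (hKU : K ×ˢ {t} ⊆ U) (hf : ContDiffOn ℝ 1 f U) :
    IntegrableOn (fun x => deriv (fun τ => f (x, τ)) t) s μ ∧
      HasDerivAt (fun τ => ∫ x in s, f (x, τ) ∂μ)
        (∫ x in s, deriv (fun τ => f (x, τ)) t ∂μ) t := by
  obtain ⟨δ, hδ, hKN⟩ := exists_prod_closedBall_subset hK hU hKU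
  set N := Metric.closedBall t δ
  have hN : N ∈ nhds t := Metric.closedBall_mem_nhds t hδ
  have hderiv : ∀ x ∈ K, ∀ τ ∈ N,
      HasDerivAt (fun τ => f (x, τ)) (fderiv ℝ f (x, τ) (0, 1)) τ := fun x hx τ hτ =>
    ((hf.differentiableOn one_ne_zero).differentiableAt
      (hU.mem_nhds (hKN ⟨hx, hτ⟩))).hasFDerivAt.comp_hasDerivAt τ
      ((hasDerivAt_const τ x).prodMk (hasDerivAt_id τ))
  have hf' : ContinuousOn (fun q => fderiv ℝ f q (0, 1)) U :=
    (ContinuousLinearMap.apply ℝ ℝ ((0, 1) : E × ℝ)).continuous.comp_continuousOn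
      (hf.continuousOn_fderiv_of_isOpen hU le_rfl)
  have hslice {g : E × ℝ → ℝ} (hg : ContinuousOn g U) {τ : ℝ} (hτ : τ ∈ N) :
      ContinuousOn (fun x => g (x, τ)) K :=
    hg.comp (Continuous.continuousOn (by fun_prop)) fun x hx => hKN ⟨hx, hτ⟩
  obtain ⟨C, hC⟩ := (hK.prod (isCompact_closedBall t δ)).exists_bound_of_continuousOn
    (hf'.mono hKN)
  have hμs : μ s ≠ ⊤ := ((measure_mono hsK).trans_lt hK.measure_lt_top).ne
  have ht : t ∈ N := Metric.mem_closedBall_self hδ.le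
  obtain ⟨hint, hhas⟩ := hasDerivAt_integral_of_dominated_loc_of_deriv_le
    (μ := μ.restrict s) (F := fun τ x => f (x, τ))
    (F' := fun τ x => fderiv ℝ f (x, τ) (0, 1)) (bound := fun _ => C) hN
    (Filter.eventually_of_mem hN fun τ hτ =>
      ((hslice hf.continuousOn hτ).mono hsK).aestronglyMeasurable hs)
    ((hslice hf.continuousOn ht).integrableOn_of_subset_isCompact hK hs hsK hμs)
    (((hslice hf' ht).mono hsK).aestronglyMeasurable hs)
    ((ae_restrict_mem hs).mono fun x hx τ hτ => hC (x, τ) ⟨hsK hx, hτ⟩)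
    (integrableOn_const hμs)
    ((ae_restrict_mem hs).mono fun x hx τ hτ => hderiv x (hsK hx) τ hτ)
  have hderiv_eq : Set.EqOn (fun x => fderiv ℝ f (x, t) (0, 1))
      (fun x => deriv (fun τ => f (x, τ)) t) s := fun x hx =>
    (hderiv x (hsK hx) t ht).deriv.symm
  exact ⟨IntegrableOn.congr_fun hint hderiv_eq hs, (setIntegral_congr_fun hs hderiv_eq) ▸ hhas⟩

theorem closure_univ_pi_Ioo_zero_one {ι : Type*} [Finite ι] :
    closure (Set.univ.pi fun _ : ι => Set.Ioo (0 : ℝ) 1) = Set.Icc 0 1 := by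
  rw [closure_pi_set]
  simp only [closure_Ioo zero_ne_one]
  exact Set.pi_univ_Icc 0 1

section UnitCube

variable {n : ℕ} {V : Set (Fin (n + 1) → ℝ)} {g : Fin (n + 1) → (Fin (n + 1) → ℝ) → ℝ}

theorem continuousOn_sum_lineDeriv (hV : IsOpen V) (hg : ∀ i, ContDiffOn ℝ 1 (g i) V) :
    ContinuousOn (fun x => ∑ i, lineDeriv ℝ (g i) x (Pi.single i 1)) V :=
  continuousOn_finsetSum _ fun i _ =>
    (contDiffOn_lineDeriv hV (hg i) (m := 0) (by simp) (Pi.single i 1)).continuousOn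

theorem setIntegral_univ_pi_Ioo_eq_Icc {m : ℕ} (f : (Fin m → ℝ) → ℝ) :
    ∫ x in Set.univ.pi fun _ => Set.Ioo (0 : ℝ) 1, f x = ∫ x in Set.Icc 0 1, f x := by
  rw [setIntegral_congr_set (by rw [volume_pi]; exact Measure.univ_pi_Ioo_ae_eq_Icc)]
  rfl

theorem integral_unitCube_sum_lineDeriv (hV : IsOpen V) (hcube : Set.Icc 0 1 ⊆ V)
    (hg : ∀ i, ContDiffOn ℝ 1 (g i) V) :
    ∫ x in Set.univ.pi fun _ => Set.Ioo (0 : ℝ) 1, ∑ i, lineDeriv ℝ (g i) x (Pi.single i 1) =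
      ∑ i, ((∫ y in Set.univ.pi fun _ => Set.Ioo (0 : ℝ) 1, g i (i.insertNth 1 y)) -
        ∫ y in Set.univ.pi fun _ => Set.Ioo (0 : ℝ) 1, g i (i.insertNth 0 y)) := by
  have hdiff : ∀ i, ∀ x ∈ V, HasFDerivAt (g i) (fderiv ℝ (g i) x) x := fun i x hx =>
    (((hg i).differentiableOn one_ne_zero).differentiableAt (hV.mem_nhds hx)).hasFDerivAt
  have hIoo : (Set.univ.pi fun _ : Fin (n + 1) => Set.Ioo (0 : ℝ) 1) ⊆ Set.Icc 0 1 :=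
    closure_univ_pi_Ioo_zero_one (ι := Fin (n + 1)) ▸ subset_closure
  have hdiv := integral_divergence_of_hasFDerivAt_off_countable' (0 : Fin (n + 1) → ℝ) 1
    zero_le_one g (fun i x => fderiv ℝ (g i) x) ∅ Set.countable_empty
    (fun i => ((hg i).continuousOn).mono hcube)
    (fun x hx i => hdiff i x (hcube (hIoo hx.1)))
    (((continuousOn_sum_lineDeriv hV hg).mono hcube).integrableOn_compact isCompact_Icc
      |>.congr_fun (fun x hx => Finset.sum_congr rfl fun i _ =>
        (hdiff i x (hcube hx)).differentiableAt.lineDeriv_eq_fderiv) measurableSet_Icc)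
  rw [setIntegral_univ_pi_Ioo_eq_Icc,
    setIntegral_congr_fun measurableSet_Icc (fun x hx => Finset.sum_congr rfl fun i _ =>
      (hdiff i x (hcube hx)).differentiableAt.lineDeriv_eq_fderiv), hdiv]
  simp only [setIntegral_univ_pi_Ioo_eq_Icc, Pi.one_apply, Pi.zero_apply]
  rfl

end UnitCube

end EulerianEntropy

open EulerianEntropy in
/-- entropy bound on the unit cube `Ω = (0,1)³` for the Eulerian
model.  If the fields are C² on a neighborhood `U` of the closure of
`Ω × [0, t₁]`, positive there, and solve the Eulerian model on `U`, then for
every time `t ∈ [0, t₁]` the time derivative of the total entropy is bounded by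
the boundary integral
`d/dt ∫_Ω S dx ≤ Σ_j [ ∫_{x_j=1} (ν wᵀ ∂q/∂x_j - F_j) dσ - ∫_{x_j=0} (ν wᵀ ∂q/∂x_j - F_j) dσ ]`. -/
theorem eulerian_entropy_bound_unit_cube
    (R cv α μ t₁ : ℝ) (hR : 0 < R) (hcv : 0 < cv) (hα : 0 < α) (hμ : 0 < μ)
    (ρ u₁ u₂ u₃ T : (Fin 3 → ℝ) × ℝ → ℝ)
    (U : Set ((Fin 3 → ℝ) × ℝ)) (hU : IsOpen U)
    (hUc : closure ((Set.univ.pi fun _ : Fin 3 => Set.Ioo (0 : ℝ) 1) ×ˢ Set.Icc 0 t₁) ⊆ U)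
    (hρreg : ContDiffOn ℝ 2 ρ U) (hu₁reg : ContDiffOn ℝ 2 u₁ U)
    (hu₂reg : ContDiffOn ℝ 2 u₂ U) (hu₃reg : ContDiffOn ℝ 2 u₃ U)
    (hTreg : ContDiffOn ℝ 2 T U)
    (hpos : ∀ p ∈ U, 0 < ρ p ∧ 0 < T p)
    (hpde : ∀ (k : Fin 5), ∀ p ∈ U,
      pt (fun p' => consVars cv (ρ p') (u₁ p') (u₂ p') (u₃ p') (T p') k) p
        + ∑ j : Fin 3,
            pd j (fun p' => invFlux R cv j (ρ p') (u₁ p') (u₂ p') (u₃ p') (T p') k) p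
      = ∑ j : Fin 3,
          pd j (fun p' => (α * μ / ρ p') *
            pd j (fun p'' => consVars cv (ρ p'') (u₁ p'') (u₂ p'') (u₃ p'') (T p'') k) p') p) :
    ∀ t ∈ Set.Icc (0 : ℝ) t₁,
      deriv (fun τ => ∫ x in Set.univ.pi fun _ : Fin 3 => Set.Ioo (0 : ℝ) 1,
          -(ρ (x, τ) * (cv * Real.log (T (x, τ)) - R * Real.log (ρ (x, τ))))) t
      ≤ ∑ j : Fin 3,
          ((∫ y in Set.univ.pi fun _ : Fin 2 => Set.Ioo (0 : ℝ) 1,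
              bdryIntegrand R cv α μ ρ u₁ u₂ u₃ T j (j.insertNth 1 y, t))
           - ∫ y in Set.univ.pi fun _ : Fin 2 => Set.Ioo (0 : ℝ) 1,
              bdryIntegrand R cv α μ ρ u₁ u₂ u₃ T j (j.insertNth 0 y, t)) := by
  intro t ht
  have hs : IsRegularState U ρ u₁ u₂ u₃ T :=
    ⟨hU, hρreg, hu₁reg, hu₂reg, hu₃reg, hTreg, hpos⟩
  have hΩ : (Set.univ.pi fun _ : Fin 3 => Set.Ioo (0 : ℝ) 1) ⊆ Set.Icc 0 1 :=
    closure_univ_pi_Ioo_zero_one (ι := Fin 3) ▸ subset_closure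
  have hslice : Set.Icc (0 : Fin 3 → ℝ) 1 ×ˢ {t} ⊆ U := by
    rintro ⟨x, _⟩ ⟨hx, rfl⟩
    refine hUc ?_
    rw [closure_prod_eq, closure_univ_pi_Ioo_zero_one]
    exact ⟨hx, subset_closure ht⟩
  obtain ⟨hint, hderiv⟩ := hasDerivAt_setIntegral_of_contDiffOn (μ := volume) isCompact_Icc
    (MeasurableSet.univ_pi fun _ => measurableSet_Ioo) hΩ hU hslice
    (contDiffOn_entropy (R := R) (cv := cv) (hρreg.of_le one_le_two) (hTreg.of_le one_le_two)
      (fun p hp => (hpos p hp).1.ne') (fun p hp => (hpos p hp).2.ne'))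
  have hV : IsOpen {x | (x, t) ∈ U} := hU.preimage (by fun_prop)
  have hcube : Set.Icc 0 1 ⊆ {x | (x, t) ∈ U} := fun x hx => hslice ⟨hx, rfl⟩
  have hG (j : Fin 3) : ContDiffOn ℝ 1 (fun x => bdryIntegrand R cv α μ ρ u₁ u₂ u₃ T j (x, t))
      {x | (x, t) ∈ U} :=
    (contDiffOn_bdryIntegrand hs j).comp (by fun_prop : ContDiff ℝ 1 fun x => (x, t)).contDiffOn
      fun _ hx => hx
  rw [hderiv.deriv, ← integral_unitCube_sum_lineDeriv hV hcube hG]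
  refine setIntegral_mono_on hint
    ((((continuousOn_sum_lineDeriv hV hG).mono hcube).integrableOn_compact isCompact_Icc).mono_set
      hΩ) (MeasurableSet.univ_pi fun _ => measurableSet_Ioo) fun x hx => ?_
  exact (pt_entropy_le_sum_pd_bdryIntegrand hs hR.le hcv.le (mul_pos hα hμ).le hpde
    (hcube (hΩ hx))).trans_eq (by simp only [pd_eq_lineDeriv_slice])
end
end

section
/- Interior-penalty term identity at a no-slip wall: let v = (ρ, u₁, u₂, u₃, T) with ρ > 0, T > 0, let u^wall ∈ ℝ³ be the wall velocity, and define the manufactured viscous boundary state v^b = (ρ, −u₁ + 2u₁^wall, −u₂ + 2u₂^wall, −u₃ + 2u₃^wall, T). Set Δw = w(v) − w(v^b), ν = αμ/ρ with α > 0, μ > 0, and define the viscous flux states f(ṽ) = ν · M(ṽ) · Δw for ṽ ∈ {v, v^b}, and the interior-penalty term 𝓜 = −β (f(v) + f(v^b))/2 with β > 0. Then w(v)ᵀ 𝓜 = −(2βαμ/(R T²)) · ‖ΔU‖² · (‖ΔU‖² + R T), where ΔU = (u₁ − u₁^wall, u₂ − u₂^wall, u₃ − u₃^wall) and ‖ΔU‖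 is its Euclidean norm. -/
open Matrix

noncomputable section

/-!
Write `d = u - u^wall`, so that the two velocities are `u^wall ± d`. The jump `Δw` is then
`(2/T)(-u^wall·d, d, 0)`: its energy component vanishes, and `M(ṽ)` applied to such a vector is
`(ρ/R)(c + ũ·y)(1, ũ, |ũ|²/2 + c_v T) + ρT(0, y, ũ·y)`. For `(c, y) = (-u^wall·d, d)` the scalar
`c + ũ·y` equals `±‖d‖²`, so in the sum over `ṽ ∈ {v, v^b}` the mass component cancels and
`(M(v) + M(v^b)) Δw = (4ρ/T)(‖d‖²/R + T)(0, d, u^wall·d)`. Pairing with `w(v)` never sees the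
logarithmic first component and gives `‖d‖²/T` times that scalar factor.
-/

section InteriorPenalty

variable (R cv cp ρ u₁ u₂ u₃ T w₁ w₂ w₃ : ℝ)

theorem entropyVars_sub_entropyVars_reflect :
    entropyVars R cv ρ u₁ u₂ u₃ T
        - entropyVars R cv ρ (-u₁ + 2 * w₁) (-u₂ + 2 * w₂) (-u₃ + 2 * w₃) T
      = (2 / T) • ![-(w₁ * (u₁ - w₁) + w₂ * (u₂ - w₂) + w₃ * (u₃ - w₃)),
          u₁ - w₁, u₂ - w₂, u₃ - w₃, 0] := by
  ext i
  fin_cases i <;>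
    simp only [entropyVars, Fin.isValue, Fin.zero_eta, Fin.mk_one, Fin.reduceFinMk, Pi.sub_apply,
      Pi.smul_apply, smul_eq_mul, cons_val, cons_val_zero, cons_val_one] <;>
    ring

theorem entropyVars_dotProduct_of_head_eq_zero (y₁ y₂ y₃ e : ℝ) :
    entropyVars R cv ρ u₁ u₂ u₃ T ⬝ᵥ ![0, y₁, y₂, y₃, e]
      = (u₁ * y₁ + u₂ * y₂ + u₃ * y₃ - e) / T := by
  simp only [entropyVars, dotProduct, Fin.sum_univ_five, Fin.isValue, cons_val, cons_val_zero,
    cons_val_one]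
  ring

theorem Mmat_mulVec_of_last_eq_zero (hR : R ≠ 0) (c y₁ y₂ y₃ : ℝ) :
    Mmat R cp ρ u₁ u₂ u₃ T *ᵥ ![c, y₁, y₂, y₃, 0]
      = (ρ / R * (c + (u₁ * y₁ + u₂ * y₂ + u₃ * y₃)))
            • ![1, u₁, u₂, u₃, (u₁ ^ 2 + u₂ ^ 2 + u₃ ^ 2) / 2 + (cp - R) * T]
        + (ρ * T) • ![0, y₁, y₂, y₃, u₁ * y₁ + u₂ * y₂ + u₃ * y₃] := by
  ext i
  fin_cases i <;>
    simp only [Mmat, mulVec, dotProduct, Fin.sum_univ_five, Fin.isValue, Fin.zero_eta, Fin.mk_one,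
      Fin.reduceFinMk, of_apply, cons_val', cons_val, cons_val_zero, cons_val_one, cons_val_fin_one,
      Pi.add_apply, Pi.smul_apply, smul_eq_mul] <;>
    field_simp <;>
    ring

theorem Mmat_mulVec_add_Mmat_reflect_mulVec (hR : R ≠ 0) :
    let x : Fin 5 → ℝ := ![-(w₁ * (u₁ - w₁) + w₂ * (u₂ - w₂) + w₃ * (u₃ - w₃)),
      u₁ - w₁, u₂ - w₂, u₃ - w₃, 0]
    Mmat R cp ρ u₁ u₂ u₃ T *ᵥ x
        + Mmat R cp ρ (-u₁ + 2 * w₁) (-u₂ + 2 * w₂) (-u₃ + 2 * w₃) T *ᵥ x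
      = (2 * ρ * (((u₁ - w₁) ^ 2 + (u₂ - w₂) ^ 2 + (u₃ - w₃) ^ 2) / R + T))
          • ![0, u₁ - w₁, u₂ - w₂, u₃ - w₃,
              w₁ * (u₁ - w₁) + w₂ * (u₂ - w₂) + w₃ * (u₃ - w₃)] := by
  intro x
  rw [Mmat_mulVec_of_last_eq_zero _ _ _ _ _ _ _ hR, Mmat_mulVec_of_last_eq_zero _ _ _ _ _ _ _ hR]
  ext i
  fin_cases i <;>
    simp only [Fin.isValue, Fin.zero_eta, Fin.mk_one, Fin.reduceFinMk, Pi.add_apply, Pi.smul_apply,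
      smul_eq_mul, cons_val, cons_val_zero, cons_val_one] <;>
    ring

end InteriorPenalty

theorem interior_penalty_identity_general
    (R cv α μ β : ℝ) (hR : 0 < R)
    (ρ u₁ u₂ u₃ T w₁ w₂ w₃ : ℝ) (hρ : 0 < ρ) (hT : 0 < T)
    (Δw 𝓜 : Fin 5 → ℝ)
    (hΔw : Δw = entropyVars R cv ρ u₁ u₂ u₃ T
        - entropyVars R cv ρ (-u₁ + 2 * w₁) (-u₂ + 2 * w₂) (-u₃ + 2 * w₃) T)
    (h𝓜 : 𝓜 = -(β / 2) •
        ((α * μ / ρ) • (Mmat R (cv + R) ρ u₁ u₂ u₃ T *ᵥ Δw)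
          + (α * μ / ρ) •
            (Mmat R (cv + R) ρ (-u₁ + 2 * w₁) (-u₂ + 2 * w₂) (-u₃ + 2 * w₃) T *ᵥ Δw))) :
    entropyVars R cv ρ u₁ u₂ u₃ T ⬝ᵥ 𝓜
      = -(2 * β * α * μ / (R * T ^ 2))
          * ((u₁ - w₁) ^ 2 + (u₂ - w₂) ^ 2 + (u₃ - w₃) ^ 2)
          * (((u₁ - w₁) ^ 2 + (u₂ - w₂) ^ 2 + (u₃ - w₃) ^ 2) + R * T) := by
  subst hΔw h𝓜
  rw [entropyVars_sub_entropyVars_reflect, mulVec_smul, mulVec_smul, ← smul_add, ← smul_add,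
    Mmat_mulVec_add_Mmat_reflect_mulVec _ _ _ _ _ _ _ _ _ _ hR.ne', smul_smul, smul_smul,
    dotProduct_smul, dotProduct_smul, entropyVars_dotProduct_of_head_eq_zero]
  simp only [smul_eq_mul]
  field_simp
  ring

/-- interior-penalty term identity at a no-slip wall.  With
`v = (ρ, u₁, u₂, u₃, T)` (`ρ > 0`, `T > 0`), wall velocity
`u^wall = (w₁, w₂, w₃)`, manufactured viscous boundary state
`v^b = (ρ, -u₁ + 2w₁, -u₂ + 2w₂, -u₃ + 2w₃, T)`, `Δw = w(v) - w(v^b)`,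
`ν = αμ/ρ`, viscous flux states `f(ṽ) = ν M(ṽ) Δw` for `ṽ ∈ {v, v^b}`, and
interior-penalty term `𝓜 = -β (f(v) + f(v^b))/2` with `β > 0`, one has
`w(v)ᵀ 𝓜 = -(2βαμ/(R T²)) ‖ΔU‖² (‖ΔU‖² + R T)` with
`‖ΔU‖² = (u₁-w₁)² + (u₂-w₂)² + (u₃-w₃)²`. -/
theorem interior_penalty_identity
    (R cv α μ β : ℝ) (hR : 0 < R) (hcv : 0 < cv)
    (hα : 0 < α) (hμ : 0 < μ) (hβ : 0 < β)
    (ρ u₁ u₂ u₃ T w₁ w₂ w₃ : ℝ) (hρ : 0 < ρ) (hT : 0 < T)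
    (Δw 𝓜 : Fin 5 → ℝ)
    (hΔw : Δw = entropyVars R cv ρ u₁ u₂ u₃ T
        - entropyVars R cv ρ (-u₁ + 2 * w₁) (-u₂ + 2 * w₂) (-u₃ + 2 * w₃) T)
    (h𝓜 : 𝓜 = -(β / 2) •
        ((α * μ / ρ) • (Mmat R (cv + R) ρ u₁ u₂ u₃ T *ᵥ Δw)
          + (α * μ / ρ) •
            (Mmat R (cv + R) ρ (-u₁ + 2 * w₁) (-u₂ + 2 * w₂) (-u₃ + 2 * w₃) T *ᵥ Δw))) :
    entropyVars R cv ρ u₁ u₂ u₃ T ⬝ᵥ 𝓜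
      = -(2 * β * α * μ / (R * T ^ 2))
          * ((u₁ - w₁) ^ 2 + (u₂ - w₂) ^ 2 + (u₃ - w₃) ^ 2)
          * (((u₁ - w₁) ^ 2 + (u₂ - w₂) ^ 2 + (u₃ - w₃) ^ 2) + R * T) :=
  interior_penalty_identity_general R cv α μ β hR ρ u₁ u₂ u₃ T w₁ w₂ w₃ hρ hT Δw 𝓜 hΔw h𝓜
end
end

section
/- The interior-penalty term is entropy dissipative: with v = (ρ, u₁, u₂, u₃, T), ρ > 0, T > 0, wall velocity u^wall ∈ ℝ³, manufactured state v^b = (ρ, −u₁ + 2u₁^wall, −u₂ + 2u₂^wall, −u₃ + 2u₃^wall, T), Δw = w(v) − w(v^b), ν = αμ/ρ, viscous flux states f(ṽ) = ν · M(ṽ) · Δw for ṽ ∈ {v, v^b}, and 𝓜 = −β (f(v) + f(v^b))/2, the entropy contribution of the penalty is nonpositive: w(v)ᵀ 𝓜 ≤ 0, for all positive parameters α, μ, β, R, c_v (with c_p = c_v + R); it vanishes if and only if the velocity jump u − u^wall is zero. -/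
/-! Since `v` and `v^b` share `ρ` and `T`, the jump `Δw` involves only the velocities, and the
entropy production collapses to `-(2αμβ/T) J (1 + J/(RT))` with `J = |u - u^wall|²`: a
nonpositive quantity that vanishes exactly when `J = 0`. -/

open Matrix

noncomputable section

lemma sq_add_sq_add_sq_eq_zero_iff {α : Type*} [Ring α] [LinearOrder α] [IsStrictOrderedRing α]
    {a b c : α} : a ^ 2 + b ^ 2 + c ^ 2 = 0 ↔ a = 0 ∧ b = 0 ∧ c = 0 := by
  rw [add_eq_zero_iff_of_nonneg (by positivity) (sq_nonneg c),
    add_eq_zero_iff_of_nonneg (sq_nonneg a) (sq_nonneg b)]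
  simp only [pow_eq_zero_iff two_ne_zero, and_assoc]

theorem entropyVars_sub_entropyVars (R cv ρ u₁ u₂ u₃ u₁' u₂' u₃' T : ℝ) (hT : T ≠ 0) :
    entropyVars R cv ρ u₁ u₂ u₃ T - entropyVars R cv ρ u₁' u₂' u₃' T
      = ![((u₁' ^ 2 + u₂' ^ 2 + u₃' ^ 2) - (u₁ ^ 2 + u₂ ^ 2 + u₃ ^ 2)) / (2 * T),
          (u₁ - u₁') / T, (u₂ - u₂') / T, (u₃ - u₃') / T, 0] := by
  ext i
  fin_cases i <;>
    simp only [entropyVars, Pi.sub_apply, Fin.zero_eta, Fin.mk_one, Fin.reduceFinMk,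
      cons_val_zero, cons_val_one, cons_val] <;>
    field_simp <;>
    ring

/- For two states with the same `ρ` and `T`, the mass row of `(M(v) + M(v')) (w(v) - w(v'))`
vanishes, so the logarithmic part of `w(v)₀` drops out and what remains is a polynomial in the
velocity jump. -/
theorem entropyVars_dotProduct_Mmat_add_mulVec_entropyVars_sub
    (R cv ρ u₁ u₂ u₃ u₁' u₂' u₃' T : ℝ) (hR : R ≠ 0) (hT : T ≠ 0) :
    entropyVars R cv ρ u₁ u₂ u₃ T ⬝ᵥ
      ((Mmat R (cv + R) ρ u₁ u₂ u₃ T + Mmat R (cv + R) ρ u₁' u₂' u₃' T) *ᵥ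
        (entropyVars R cv ρ u₁ u₂ u₃ T - entropyVars R cv ρ u₁' u₂' u₃' T))
      = ρ / T * ((u₁ - u₁') ^ 2 + (u₂ - u₂') ^ 2 + (u₃ - u₃') ^ 2)
          * (1 + ((u₁ - u₁') ^ 2 + (u₂ - u₂') ^ 2 + (u₃ - u₃') ^ 2) / (4 * R * T)) := by
  rw [entropyVars_sub_entropyVars _ _ _ _ _ _ _ _ _ _ hT]
  simp only [entropyVars, Mmat, mulVec, dotProduct, Fin.sum_univ_five, Matrix.add_apply,
    of_apply, cons_val', cons_val_fin_one, cons_val_zero, cons_val_one, cons_val]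
  field_simp
  ring

theorem interior_penalty_dissipative_general
    (R cv α μ β : ℝ) (hR : 0 < R)
    (hα : 0 < α) (hμ : 0 < μ) (hβ : 0 < β)
    (ρ u₁ u₂ u₃ T w₁ w₂ w₃ : ℝ) (hρ : 0 < ρ) (hT : 0 < T)
    (Δw 𝓜 : Fin 5 → ℝ)
    (hΔw : Δw = entropyVars R cv ρ u₁ u₂ u₃ T
        - entropyVars R cv ρ (-u₁ + 2 * w₁) (-u₂ + 2 * w₂) (-u₃ + 2 * w₃) T)
    (h𝓜 : 𝓜 = -(β / 2) •
        ((α * μ / ρ) • (Mmat R (cv + R) ρ u₁ u₂ u₃ T *ᵥ Δw)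
          + (α * μ / ρ) •
            (Mmat R (cv + R) ρ (-u₁ + 2 * w₁) (-u₂ + 2 * w₂) (-u₃ + 2 * w₃) T *ᵥ Δw))) :
    entropyVars R cv ρ u₁ u₂ u₃ T ⬝ᵥ 𝓜 ≤ 0 ∧
    (entropyVars R cv ρ u₁ u₂ u₃ T ⬝ᵥ 𝓜 = 0 ↔ u₁ = w₁ ∧ u₂ = w₂ ∧ u₃ = w₃) := by
  set D := (u₁ - w₁) ^ 2 + (u₂ - w₂) ^ 2 + (u₃ - w₃) ^ 2 with hD
  have hproduction : entropyVars R cv ρ u₁ u₂ u₃ T ⬝ᵥ 𝓜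
      = -(2 * α * μ * β / T) * (D * (1 + D / (R * T))) := by
    rw [h𝓜, ← smul_add, ← add_mulVec, hΔw, dotProduct_smul, dotProduct_smul,
      entropyVars_dotProduct_Mmat_add_mulVec_entropyVars_sub _ _ _ _ _ _ _ _ _ _ hR.ne' hT.ne', hD]
    simp only [smul_eq_mul]
    field_simp
    ring
  have hc : 0 < 2 * α * μ * β / T := by positivity
  have hfactor : 0 < 1 + D / (R * T) := by positivity
  rw [hproduction, neg_mul, neg_nonpos, neg_eq_zero, mul_eq_zero, mul_eq_zero,
    or_iff_right hc.ne', or_iff_left hfactor.ne', hD, sq_add_sq_add_sq_eq_zero_iff]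
  exact ⟨by positivity, by simp only [sub_eq_zero]⟩

/-- the interior-penalty term is entropy dissipative.  With
`v = (ρ, u₁, u₂, u₃, T)` (`ρ > 0`, `T > 0`), wall velocity
`u^wall = (w₁, w₂, w₃)`, manufactured state
`v^b = (ρ, -u₁ + 2w₁, -u₂ + 2w₂, -u₃ + 2w₃, T)`, `Δw = w(v) - w(v^b)`,
`ν = αμ/ρ`, viscous flux states `f(ṽ) = ν M(ṽ) Δw` for `ṽ ∈ {v, v^b}`, and
`𝓜 = -β (f(v) + f(v^b))/2`, the entropy contribution of the penalty is
nonpositive, `w(v)ᵀ 𝓜 ≤ 0`, for all positive parameters `α, μ, β, R, c_v`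
(with `c_p = c_v + R`); it vanishes if and only if the velocity jump
`u - u^wall` is zero. -/
theorem interior_penalty_dissipative
    (R cv α μ β : ℝ) (hR : 0 < R) (hcv : 0 < cv)
    (hα : 0 < α) (hμ : 0 < μ) (hβ : 0 < β)
    (ρ u₁ u₂ u₃ T w₁ w₂ w₃ : ℝ) (hρ : 0 < ρ) (hT : 0 < T)
    (Δw 𝓜 : Fin 5 → ℝ)
    (hΔw : Δw = entropyVars R cv ρ u₁ u₂ u₃ T
        - entropyVars R cv ρ (-u₁ + 2 * w₁) (-u₂ + 2 * w₂) (-u₃ + 2 * w₃) T)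
    (h𝓜 : 𝓜 = -(β / 2) •
        ((α * μ / ρ) • (Mmat R (cv + R) ρ u₁ u₂ u₃ T *ᵥ Δw)
          + (α * μ / ρ) •
            (Mmat R (cv + R) ρ (-u₁ + 2 * w₁) (-u₂ + 2 * w₂) (-u₃ + 2 * w₃) T *ᵥ Δw))) :
    entropyVars R cv ρ u₁ u₂ u₃ T ⬝ᵥ 𝓜 ≤ 0 ∧
    (entropyVars R cv ρ u₁ u₂ u₃ T ⬝ᵥ 𝓜 = 0 ↔ u₁ = w₁ ∧ u₂ = w₂ ∧ u₃ = w₃) :=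
  interior_penalty_dissipative_general R cv α μ β hR hα hμ hβ ρ u₁ u₂ u₃ T w₁ w₂ w₃ hρ hT Δw 𝓜 hΔw
    h𝓜
end
end
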